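/- arXiv:1706.00918 — 6 statements merged into one kernel-verified Lean document; each statement's English description precedes it below -/
import Mathlib

section
/- For a finite group G acting on a finite set X and k ≥ 1, the k-th order Euler characteristic χ^(k)(X,G) = (1/|G|) · Σ_{(g₀,...,g_k) ∈ G^{k+1}, pairwise commuting} |X^{⟨g₀,...,g_k⟩}| satisfies the recursion χ^(k)(X,G) = Σ_{[g] ∈ Conj(G)} χ^(k-1)(X^{⟨g⟩}, C_G(g)), where χ^(0)(X,G) := |X/G|. -/
open MulAction

/-- The number of orbits of a group action. -/
noncomputable def numOrbits (G : Type*) [Group G] (X : Type*) [MulAction G X] : ℕ :=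
  Nat.card (Quotient (orbitRel G X))

/-- `(1/|G|) · Σ_{(g₀,…,g_k) pairwise commuting} |X^{⟨g₀,…,g_k⟩}|`. -/
noncomputable def chiT (k : ℕ) (G : Type*) [Group G] (X : Type*) [MulAction G X] : ℚ :=
  (Nat.card {p : (Fin (k + 1) → G) × X //
      (∀ i j, Commute (p.1 i) (p.1 j)) ∧ ∀ i, p.1 i • p.2 = p.2} : ℚ) / (Nat.card G : ℚ)

/-- The higher order Euler characteristic: `χ⁰(X,G) = |X/G|`, and for `k ≥ 1` it is given by
the commuting-tuples formula. -/
noncomputable def chi (k : ℕ) (G : Type*) [Group G] (X : Type*) [MulAction G X] : ℚ :=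
  match k with
  | 0 => (numOrbits G X : ℚ)
  | _ + 1 => chiT k G X

/-- The centralizer of `g` acts on the fixed-point set of `g`. -/
instance fixAction (G : Type*) [Group G] (X : Type*) [MulAction G X] (g : G) :
    MulAction (Subgroup.centralizer ({g} : Set G)) {x : X // g • x = x} where
  smul c x := ⟨(c : G) • (x : X), by
    have h : g * (c : G) = (c : G) • g :=
      Subgroup.mem_centralizer_iff.mp c.2 g (Set.mem_singleton g)
    rw [← mul_smul, h, smul_eq_mul, mul_smul, x.2]⟩
  one_smul x := Subtype.ext (one_smul G x.1)
  mul_smul a b x := Subtype.ext (mul_smul (a : G) (b : G) x.1)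

/-- The recursively defined higher order Euler characteristic:
`χ⁰(X,G) = |X/G|`, `χᵏ(X,G) = Σ_{[g]} χ^{k-1}(X^{⟨g⟩}, C_G(g))`. -/
noncomputable def chiRec : (k : ℕ) → (G : Type) → [inst : Group G] → (X : Type) →
    [inst2 : MulAction G X] → ℚ :=
  Nat.rec (motive := fun _ => (G : Type) → [inst : Group G] → (X : Type) →
      [inst2 : MulAction G X] → ℚ)
    (fun G _ X _ => (numOrbits G X : ℚ))
    (fun _k ih G _ X _ => ∑ᶠ c : ConjClasses G,
        ih (Subgroup.centralizer ({Quotient.out c} : Set G))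
          {x : X // Quotient.out c • x = x})
namespace HOEulerAux

open MulAction Subgroup

variable (k : ℕ) (G : Type*) [Group G] (X : Type*) [MulAction G X]

abbrev S := {p : (Fin (k + 1) → G) × X //
    (∀ i j, Commute (p.1 i) (p.1 j)) ∧ ∀ i, p.1 i • p.2 = p.2}

lemma chiT_eq : chiT k G X = (Nat.card (S k G X) : ℚ) / (Nat.card G : ℚ) := rfl

/-- Transport `S` along a compatible pair of equivalences. -/
def transport {G₁ G₂ : Type*} [Group G₁] [Group G₂] {X₁ X₂ : Type*} [MulAction G₁ X₁]
    [MulAction G₂ X₂] (e : G₁ ≃* G₂) (f : X₁ ≃ X₂) (h : ∀ g x, f (g • x) = e g • f x) :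
    S k G₁ X₁ ≃ S k G₂ X₂ where
  toFun p := ⟨(fun i => e (p.1.1 i), f p.1.2),
    fun i j => (p.2.1 i j).map (e : G₁ →* G₂),
    fun i => by rw [← h, p.2.2 i]⟩
  invFun p := ⟨(fun i => e.symm (p.1.1 i), f.symm p.1.2),
    fun i j => (p.2.1 i j).map (e.symm : G₂ →* G₁),
    fun i => by
      apply f.injective
      rw [h, MulEquiv.apply_symm_apply, Equiv.apply_symm_apply, p.2.2 i]⟩
  left_inv p := Subtype.ext
    (Prod.ext (funext fun i => e.symm_apply_apply _) (f.symm_apply_apply _))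
  right_inv p := Subtype.ext
    (Prod.ext (funext fun i => e.apply_symm_apply _) (f.apply_symm_apply _))

def splitEquiv : S (k + 1) G X ≃
    Σ g : G, S k (centralizer ({g} : Set G)) {x : X // g • x = x} where
  toFun p := ⟨p.1.1 0,
    ⟨(fun i => ⟨p.1.1 i.succ, mem_centralizer_iff.mpr fun m hm => by
        rw [Set.eq_of_mem_singleton hm]; exact p.2.1 0 i.succ⟩,
      ⟨p.1.2, p.2.2 0⟩),
      fun i j => Subtype.ext (p.2.1 i.succ j.succ),
      fun i => Subtype.ext (p.2.2 i.succ)⟩⟩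
  invFun s := ⟨(Fin.cons s.1 (fun i => (s.2.1.1 i : G)), (s.2.1.2 : X)),
    fun i j => by
      refine Fin.cases ?_ (fun i' => ?_) i <;> refine Fin.cases ?_ (fun j' => ?_) j <;>
        simp only [Fin.cons_zero, Fin.cons_succ]
      · exact Commute.refl _
      · exact mem_centralizer_iff.mp (s.2.1.1 j').2 s.1 rfl
      · exact (mem_centralizer_iff.mp (s.2.1.1 i').2 s.1 rfl).symm
      · exact congrArg Subtype.val (s.2.2.1 i' j')
    , fun i => by
      refine Fin.cases ?_ (fun i' => ?_) i <;> simp only [Fin.cons_zero, Fin.cons_succ]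
      · exact s.2.1.2.2
      · exact congrArg Subtype.val (s.2.2.2 i')⟩
  left_inv p := Subtype.ext (Prod.ext (funext fun i =>
    Fin.cases rfl (fun i' => rfl) i) rfl)
  right_inv s := by
    obtain ⟨g, ⟨⟨f, x⟩, hc, hf⟩⟩ := s
    refine Sigma.ext rfl (heq_of_eq (Subtype.ext (Prod.ext ?_ ?_)))
    · funext i
      exact Subtype.ext (by simp)
    · exact Subtype.ext rfl


variable {G}

lemma mk_out {H : Type*} [Monoid H] (c : ConjClasses H) :
    ConjClasses.mk (Quotient.out c) = c := Quotient.out_eq c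

private lemma conj_comm_aux (a u v : G) (h : u * v = v * u) :
    (a * u * a⁻¹) * (a * v * a⁻¹) = (a * v * a⁻¹) * (a * u * a⁻¹) := by
  have h1 : a * u * a⁻¹ * (a * v * a⁻¹) = a * (u * v) * a⁻¹ := by group
  have h2 : a * v * a⁻¹ * (a * u * a⁻¹) = a * (v * u) * a⁻¹ := by group
  rw [h1, h2, h]

/-- Conjugation as an isomorphism of centralizers. -/
def conjCentralizerEquiv (a g : G) :
    centralizer ({g} : Set G) ≃* centralizer ({a * g * a⁻¹} : Set G) where
  toFun c := ⟨a * c * a⁻¹, mem_centralizer_iff.mpr fun m hm => by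
    rw [Set.eq_of_mem_singleton hm]
    exact conj_comm_aux a g c (mem_centralizer_iff.mp c.2 g rfl)⟩
  invFun c := ⟨a⁻¹ * c * a, mem_centralizer_iff.mpr fun m hm => by
    rw [Set.eq_of_mem_singleton hm]
    have h := mem_centralizer_iff.mp c.2 (a * g * a⁻¹) rfl
    have := conj_comm_aux a⁻¹ (a * g * a⁻¹) (c : G) h
    simpa [mul_assoc] using this⟩
  left_inv c := Subtype.ext (by group)
  right_inv c := Subtype.ext (by group)
  map_mul' c d := Subtype.ext (by
    show a * (↑c * ↑d) * a⁻¹ = (a * ↑c * a⁻¹) * (a * ↑d * a⁻¹)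
    group)

/-- Translation by `a` between fixed-point sets of conjugate elements. -/
def conjFixEquiv (a g : G) : {x : X // g • x = x} ≃ {x : X // (a * g * a⁻¹) • x = x} where
  toFun x := ⟨a • x.1, by
    simp only [mul_smul]
    rw [inv_smul_smul, x.2]⟩
  invFun y := ⟨a⁻¹ • y.1, by
    have h := y.2
    calc g • a⁻¹ • y.1 = a⁻¹ • ((a * g * a⁻¹) • y.1) := by simp [mul_smul]
      _ = a⁻¹ • y.1 := by rw [h]⟩
  left_inv x := Subtype.ext (inv_smul_smul a x.1)
  right_inv y := Subtype.ext (smul_inv_smul a y.1)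

/-- The full equivalence between the tuple sets for conjugate elements. -/
def conjSEquiv (k : ℕ) (a g : G) :
    S k (centralizer ({g} : Set G)) {x : X // g • x = x} ≃
      S k (centralizer ({a * g * a⁻¹} : Set G)) {x : X // (a * g * a⁻¹) • x = x} :=
  transport k (conjCentralizerEquiv a g) (conjFixEquiv X a g) (fun c x => by
    refine Subtype.ext ?_
    show a • ((c : G) • x.1) = (a * (c : G) * a⁻¹) • (a • x.1)
    simp only [mul_smul, inv_smul_smul])

variable (G)

lemma card_S_conj (k : ℕ) {g h : G} (hgh : ConjClasses.mk g = ConjClasses.mk h) :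
    Nat.card (S k (centralizer ({g} : Set G)) {x : X // g • x = x}) =
      Nat.card (S k (centralizer ({h} : Set G)) {x : X // h • x = x}) := by
  obtain ⟨a, ha⟩ := isConj_iff.mp (ConjClasses.mk_eq_mk_iff_isConj.mp hgh)
  rw [← ha]
  exact Nat.card_congr (conjSEquiv (X := X) k a g)

lemma card_fiber_mul_card_centralizer [Finite G] (c : ConjClasses G) :
    Nat.card {g : G // ConjClasses.mk g = c} *
      Nat.card (centralizer ({Quotient.out c} : Set G)) = Nat.card G := by
  rw [Subgroup.nat_card_centralizer_nat_card_stabilizer]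
  have e1 : {g : G // ConjClasses.mk g = c} ≃ orbit (ConjAct G) (Quotient.out c) :=
    Equiv.subtypeEquivRight fun g => by
      rw [ConjAct.orbit_eq_carrier_conjClasses, ConjClasses.mem_carrier_iff_mk_eq, mk_out]
  rw [Nat.card_congr e1, ← Nat.card_prod]
  exact Nat.card_congr (MulAction.orbitProdStabilizerEquivGroup (ConjAct G) (Quotient.out c))

lemma main_count (k : ℕ) [Finite G] [Finite X] :
    (Nat.card (S (k + 1) G X) : ℚ) / (Nat.card G : ℚ) =
      ∑ᶠ c : ConjClasses G,
        (Nat.card (S k (centralizer ({Quotient.out c} : Set G))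
            {x : X // Quotient.out c • x = x}) : ℚ) /
          (Nat.card (centralizer ({Quotient.out c} : Set G)) : ℚ) := by
  classical
  letI : Fintype G := Fintype.ofFinite G
  letI : Fintype (ConjClasses G) := Fintype.ofFinite _
  letI : ∀ g : G, Fintype (S k (centralizer ({g} : Set G)) {x : X // g • x = x}) :=
    fun g => Fintype.ofFinite _
  have hG0 : (Nat.card G : ℚ) ≠ 0 := Nat.cast_ne_zero.mpr Nat.card_pos.ne'
  set N : G → ℚ := fun g =>
    (Nat.card (S k (centralizer ({g} : Set G)) {x : X // g • x = x}) : ℚ) with hN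
  have hsplit : (Nat.card (S (k + 1) G X) : ℚ) = ∑ g : G, N g := by
    rw [Nat.card_congr (splitEquiv k G X), Nat.card_eq_fintype_card, Fintype.card_sigma]
    push_cast
    refine Finset.sum_congr rfl fun g _ => ?_
    simp [hN, Nat.card_eq_fintype_card]
  rw [hsplit, finsum_eq_sum_of_fintype]
  rw [← Fintype.sum_fiberwise (fun g : G => ConjClasses.mk g) N]
  rw [Finset.sum_div]
  refine Finset.sum_congr rfl fun c _ => ?_
  have hfib : ∀ g : {g : G // ConjClasses.mk g = c}, N g.1 = N (Quotient.out c) := by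
    intro g
    simp only [hN]
    exact_mod_cast card_S_conj G X k (g.2.trans (mk_out c).symm)
  rw [Finset.sum_congr rfl fun g _ => hfib g, Finset.sum_const, Finset.card_univ,
    nsmul_eq_mul]
  have hC0 : (Nat.card (centralizer ({Quotient.out c} : Set G)) : ℚ) ≠ 0 :=
    Nat.cast_ne_zero.mpr Nat.card_pos.ne'
  rw [div_eq_div_iff hG0 hC0, mul_right_comm]
  have hcard := card_fiber_mul_card_centralizer G c
  have hcard' : (Fintype.card {g : G // ConjClasses.mk g = c} : ℚ) *
      (Nat.card (centralizer ({Quotient.out c} : Set G)) : ℚ) = (Nat.card G : ℚ) := by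
    rw [← Nat.card_eq_fintype_card]
    exact_mod_cast hcard
  rw [hcard', mul_comm]

lemma chi_eq_card (k : ℕ) [Finite G] [Finite X] :
    chi k G X = (Nat.card (S k G X) : ℚ) / (Nat.card G : ℚ) := by
  cases k with
  | succ n => rfl
  | zero =>
    classical
    letI : Fintype G := Fintype.ofFinite G
    letI : Fintype X := Fintype.ofFinite X
    letI : Fintype (orbitRel.Quotient G X) := Fintype.ofFinite _
    letI : ∀ g : G, Fintype (fixedBy X g) := fun g => Fintype.ofFinite _
    have e : S 0 G X ≃ Σ g : G, fixedBy X g :=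
      { toFun := fun p => ⟨p.1.1 0, p.1.2, p.2.2 0⟩
        invFun := fun s => ⟨(fun _ => s.1, s.2.1), fun _ _ => Commute.refl _, fun _ => s.2.2⟩
        left_inv := fun p => Subtype.ext (Prod.ext
          (funext fun i => congrArg p.1.1 (Subsingleton.elim (0 : Fin 1) i)) rfl)
        right_inv := fun s => rfl }
    have hG0 : (Nat.card G : ℚ) ≠ 0 := Nat.cast_ne_zero.mpr Nat.card_pos.ne'
    have hb := MulAction.sum_card_fixedBy_eq_card_orbits_mul_card_group G X
    simp only [← Nat.card_eq_fintype_card] at hb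
    have hcard : Nat.card (S 0 G X) = numOrbits G X * Nat.card G := by
      rw [Nat.card_congr e, Nat.card_eq_fintype_card, Fintype.card_sigma]
      simp only [← Nat.card_eq_fintype_card]
      exact hb
    show (numOrbits G X : ℚ) = _
    rw [hcard]
    push_cast
    field_simp

end HOEulerAux
theorem higher_order_euler_char_recursion
    (G : Type) [Group G] [Finite G] (X : Type) [MulAction G X] [Finite X]
    (k : ℕ) (hk : 1 ≤ k) :
    chi k G X = ∑ᶠ c : ConjClasses G,
      chi (k - 1) (Subgroup.centralizer ({Quotient.out c} : Set G))
        {x : X // Quotient.out c • x = x} := by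
  obtain ⟨m, rfl⟩ : ∃ m, k = m + 1 := ⟨k - 1, (Nat.succ_pred_eq_of_pos hk).symm⟩
  rw [show chi (m + 1) G X = chiT (m + 1) G X from rfl, HOEulerAux.chiT_eq (m + 1) G X,
    HOEulerAux.main_count G X m]
  refine finsum_congr fun c => ?_
  rw [Nat.add_sub_cancel]
  exact (HOEulerAux.chi_eq_card _ _ m).symm
end

section
/- For finite groups G, G' acting on finite sets X, X' respectively, and for any k ≥ 0, the higher order Euler characteristic is multiplicative: χ^(k)(X × X', G × G') = χ^(k)(X,G) · χ^(k)(X',G'), where G × G' acts diagonally (componentwise) on X × X'. -/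
open MulAction

/-- Componentwise action of `G × G'` on `X × X'`. -/
instance prodPairAction (G G' X X' : Type*) [Group G] [Group G']
    [MulAction G X] [MulAction G' X'] : MulAction (G × G') (X × X') where
  smul p q := (p.1 • q.1, p.2 • q.2)
  one_smul q := Prod.ext (one_smul G q.1) (one_smul G' q.2)
  mul_smul a b q := Prod.ext (mul_smul a.1 b.1 q.1) (mul_smul a.2 b.2 q.2)

section Aux

variable (G G' X X' : Type) [Group G] [Group G'] [MulAction G X] [MulAction G' X']

/-- Orbits of the product action correspond to pairs of orbits. -/
noncomputable def orbitProdEquiv :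
    Quotient (orbitRel (G × G') (X × X')) ≃
      Quotient (orbitRel G X) × Quotient (orbitRel G' X') where
  toFun := Quotient.lift
    (fun p : X × X' => (Quotient.mk (orbitRel G X) p.1, Quotient.mk (orbitRel G' X') p.2))
    (by
      rintro ⟨a, a'⟩ ⟨b, b'⟩ h
      obtain ⟨g, hg⟩ := h
      have h1 : g.1 • b = a := congrArg Prod.fst hg
      have h2 : g.2 • b' = a' := congrArg Prod.snd hg
      exact Prod.ext (Quotient.sound ⟨g.1, h1⟩) (Quotient.sound ⟨g.2, h2⟩))
  invFun := fun q => Quotient.lift₂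
    (fun x x' => Quotient.mk (orbitRel (G × G') (X × X')) (x, x'))
    (by
      intro a a' b b' h h'
      obtain ⟨g, hg⟩ := h
      obtain ⟨g', hg'⟩ := h'
      exact Quotient.sound ⟨(g, g'), Prod.ext hg hg'⟩) q.1 q.2
  left_inv := by
    rintro ⟨⟨x, x'⟩⟩
    rfl
  right_inv := by
    rintro ⟨⟨x⟩, ⟨x'⟩⟩
    rfl

/-- The commuting-fixing tuples of the product action correspond to pairs. -/
def tupleProdEquiv (k : ℕ) :
    {p : (Fin (k + 1) → G × G') × (X × X') //
        (∀ i j, Commute (p.1 i) (p.1 j)) ∧ ∀ i, p.1 i • p.2 = p.2} ≃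
      {p : (Fin (k + 1) → G) × X //
          (∀ i j, Commute (p.1 i) (p.1 j)) ∧ ∀ i, p.1 i • p.2 = p.2} ×
      {p : (Fin (k + 1) → G') × X' //
          (∀ i j, Commute (p.1 i) (p.1 j)) ∧ ∀ i, p.1 i • p.2 = p.2} where
  toFun p :=
    (⟨(fun i => (p.1.1 i).1, p.1.2.1),
      fun i j => congrArg Prod.fst (p.2.1 i j),
      fun i => congrArg Prod.fst (p.2.2 i)⟩,
     ⟨(fun i => (p.1.1 i).2, p.1.2.2),
      fun i j => congrArg Prod.snd (p.2.1 i j),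
      fun i => congrArg Prod.snd (p.2.2 i)⟩)
  invFun q :=
    ⟨((fun i => (q.1.1.1 i, q.2.1.1 i)), (q.1.1.2, q.2.1.2)),
      fun i j => Prod.ext (q.1.2.1 i j) (q.2.2.1 i j),
      fun i => Prod.ext (q.1.2.2 i) (q.2.2.2 i)⟩
  left_inv p := rfl
  right_inv q := rfl

end Aux

theorem higher_order_euler_char_multiplicative
    (G : Type) [Group G] [Finite G] (X : Type) [MulAction G X] [Finite X]
    (G' : Type) [Group G'] [Finite G'] (X' : Type) [MulAction G' X'] [Finite X']
    (k : ℕ) :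
    chi k (G × G') (X × X') = chi k G X * chi k G' X' := by
  cases k with
  | zero =>
    simp only [chi, numOrbits]
    rw [Nat.card_congr (orbitProdEquiv G G' X X'), Nat.card_prod, Nat.cast_mul]
  | succ k =>
    simp only [chi, chiT]
    rw [Nat.card_congr (tupleProdEquiv G G' X X' (k + 1)), Nat.card_prod, Nat.cast_mul,
      Nat.card_prod, Nat.cast_mul, mul_div_mul_comm]
end

section
/- Let G be a subgroup of a finite group H, let X be a finite G-set, and let g ∈ G. Then the fixed-point set (ind_G^H X)^{⟨g⟩} of g acting on the induced H-set, together with its C_H(g)-action, is C_H(g)-equivariantly isomorphic to the disjoint union, over conjugacy classes [g'] of G with g' conjugate to g in H, of the induced sets ind_{C_G(g')}^{C_H(g')} (X^{⟨g'⟩}). -/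
/-!
A point of `ind_G^H X` is a class `[p, x]`, and it is fixed by `g` exactly when `p⁻¹ g p` lies
in `G` and fixes `x`. The `G`-conjugacy class of `p⁻¹ g p` is an invariant of the point, and
moving the representative within `G` lets us take `p⁻¹ g p = g'` for the chosen representative
`g'` of that class. If `h⁻¹ g h = g'`, the representatives with `p⁻¹ g p = g'` are exactly the
`p = h n` with `n ∈ C_H(g')`, and two of them give the same point iff they differ by an element
of `C_G(g')`. This identifies the `[g']`-part of the fixed points with
`ind_{C_G(g')}^{C_H(g')} X^{⟨g'⟩}` via `[n, x] ↦ [h n, x]`, and `k ∈ C_H(g)` acts on the left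
as `h⁻¹ k h` does.
-/

open MulAction

section Ind
variable {K H : Type*} [Group K] [Group H]

/-- The equivalence relation on `H × X` defining the induced `H`-set of a `K`-set `X`
along a homomorphism `f : K →* H`:
`(h₁,x₁) ∼ (h₂,x₂)` iff `∃ g, h₂ = h₁ (f g)⁻¹` and `x₂ = g • x₁`. -/
def indSetoid (f : K →* H) (X : Type*) [MulAction K X] : Setoid (H × X) where
  r p q := ∃ g : K, q.1 = p.1 * (f g)⁻¹ ∧ q.2 = g • p.2
  iseqv := by
    constructor
    · exact fun p => ⟨1, by simp⟩
    · rintro p q ⟨g, h1, h2⟩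
      exact ⟨g⁻¹, by simp [h1, mul_assoc], by simp [h2]⟩
    · rintro p q r ⟨g, h1, h2⟩ ⟨g', h1', h2'⟩
      exact ⟨g' * g, by simp [h1, h1', mul_assoc], by simp [h2, h2', mul_smul]⟩

/-- The induced `H`-set `ind_K^H X = (H × X)/∼`. -/
def Ind (f : K →* H) (X : Type*) [MulAction K X] : Type _ := Quotient (indSetoid f X)

/-- `H` acts on the induced set by left multiplication on the first coordinate. -/
instance Ind.mulAction (f : K →* H) (X : Type*) [MulAction K X] :
    MulAction H (Ind f X) where
  smul h := Quotient.map (fun p => (h * p.1, p.2))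
    (by rintro p q ⟨g, h1, h2⟩; exact ⟨g, by simp [h1, mul_assoc], h2⟩)
  one_smul x := by
    refine Quotient.inductionOn x (fun p => ?_)
    show Quotient.map _ _ _ = _
    simp
  mul_smul a b x := by
    refine Quotient.inductionOn x (fun p => ?_)
    show Quotient.map _ _ _ = Quotient.map _ _ (Quotient.map _ _ _)
    simp [mul_assoc]

end Ind
section Centralizers

/-- The inclusion `C_G(g) →* C_H(g)` for a subgroup `G ≤ H` and `g ∈ G`. -/
def centInc {H : Type*} [Group H] (G : Subgroup H) (g : G) :
    Subgroup.centralizer ({g} : Set G) →* Subgroup.centralizer ({(g : H)} : Set H) where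
  toFun k := ⟨((k : G) : H), by
    rw [Subgroup.mem_centralizer_iff]
    rintro m hm
    rw [Set.mem_singleton_iff] at hm
    subst hm
    have h := Subgroup.mem_centralizer_iff.mp k.2 g (Set.mem_singleton g)
    have h' : g * (k : G) = (k : G) * g := by simpa [smul_eq_mul] using h
    exact_mod_cast congrArg (fun x : G => (x : H)) h'⟩
  map_one' := rfl
  map_mul' a b := rfl

/-- Conjugation by `a` carries the centralizer of `g` to the centralizer of `a⁻¹ga`. -/
def conjElem {H : Type*} [Group H] {g b a : H} (ha : a⁻¹ * g * a = b)
    (k : Subgroup.centralizer ({g} : Set H)) : Subgroup.centralizer ({b} : Set H) :=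
  ⟨a⁻¹ * (k : H) * a, by
    subst ha
    rw [Subgroup.mem_centralizer_iff]
    rintro m hm
    rw [Set.mem_singleton_iff] at hm
    subst hm
    have hk : g * (k : H) = (k : H) * g := by
      simpa [smul_eq_mul] using Subgroup.mem_centralizer_iff.mp k.2 g (Set.mem_singleton g)
    have h2 : g * ((k : H) * a) = (k : H) * (g * a) := by rw [← mul_assoc, hk, mul_assoc]
    simp [mul_assoc, h2]⟩

end Centralizers


open Subgroup

namespace Ind

variable {K H : Type*} [Group K] [Group H] {X : Type*} [MulAction K X] {f : K →* H}

def mk (f : K →* H) (p : H) (x : X) : Ind f X := Quotient.mk (indSetoid f X) (p, x)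

@[elab_as_elim]
theorem induction_on {motive : Ind f X → Prop} (z : Ind f X)
    (mk : ∀ p x, motive (mk f p x)) : motive z :=
  Quotient.inductionOn z fun q => mk q.1 q.2

theorem mk_eq_mk_iff {p q : H} {x y : X} :
    mk f p x = mk f q y ↔ ∃ k : K, q = p * (f k)⁻¹ ∧ y = k • x :=
  Quotient.eq

theorem smul_mk (a p : H) (x : X) : a • mk f p x = mk f (a * p) x := rfl

end Ind

section Fixed

variable {H : Type*} [Group H] {G : Subgroup H} {X : Type*} [MulAction G X]

theorem Ind.smul_mk_eq_self_iff {g p : H} {x : X} :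
    g • Ind.mk G.subtype p x = Ind.mk G.subtype p x ↔
      ∃ k : G, p⁻¹ * g * p = k ∧ k • x = x := by
  rw [Ind.smul_mk, Ind.mk_eq_mk_iff]
  constructor
  · rintro ⟨k, hp, hx⟩
    rw [eq_mul_inv_iff_mul_eq] at hp
    exact ⟨k, by rw [mul_assoc, ← hp, inv_mul_cancel_left]; rfl, hx.symm⟩
  · rintro ⟨k, hk, hx⟩
    exact ⟨k, by rw [coe_subtype, ← hk]; group, hx.symm⟩

theorem Ind.exists_mk_eq_of_isConj {g p : H} {k s : G} {x : X}
    (hk : p⁻¹ * g * p = k) (hx : k • x = x) (hks : IsConj k s) :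
    ∃ (q : H) (x' : X), Ind.mk G.subtype p x = Ind.mk G.subtype q x' ∧
      q⁻¹ * g * q = s ∧ s • x' = x' := by
  obtain ⟨u, rfl⟩ := isConj_iff.mp hks
  refine ⟨p * (u : H)⁻¹, u • x, Ind.mk_eq_mk_iff.mpr ⟨u, rfl, rfl⟩, ?_, ?_⟩
  · push_cast
    rw [← hk]
    group
  · rw [smul_smul, inv_mul_cancel_right, mul_smul, hx]

theorem conj_mul_eq_of_mem_centralizer {g a s n : H} (ha : a⁻¹ * g * a = s)
    (hn : n ∈ centralizer {s}) : (a * n)⁻¹ * g * (a * n) = s := by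
  rw [mem_centralizer_singleton_iff] at hn
  calc (a * n)⁻¹ * g * (a * n) = n⁻¹ * (a⁻¹ * g * a) * n := by group
    _ = s := by rw [ha, mul_assoc, ← hn, inv_mul_cancel_left]

variable {g a a' : H} {s s' : G}

def fixedIndMap (ha : a⁻¹ * g * a = s) (z : Ind (centInc G s) {x : X // s • x = x}) :
    {y : Ind G.subtype X // g • y = y} :=
  Quotient.lift
    (fun q => ⟨Ind.mk G.subtype (a * q.1) q.2.1,
      Ind.smul_mk_eq_self_iff.mpr ⟨s, conj_mul_eq_of_mem_centralizer ha q.1.2, q.2.2⟩⟩)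
    (by
      rintro ⟨n, x⟩ ⟨n', x'⟩ ⟨m, hn, hx⟩
      refine Subtype.ext (Ind.mk_eq_mk_iff.mpr ⟨m, ?_, congrArg Subtype.val hx⟩)
      rw [hn]
      simp [centInc, mul_assoc])
    z

theorem fixedIndMap_mk (ha : a⁻¹ * g * a = s) (n : centralizer {(s : H)})
    (x : {x : X // s • x = x}) :
    (fixedIndMap ha (Ind.mk (centInc G s) n x)).1 = Ind.mk G.subtype (a * n) x.1 :=
  rfl

theorem fixedIndMap_conjElem_smul (ha : a⁻¹ * g * a = s) (k : centralizer {g})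
    (z : Ind (centInc G s) {x : X // s • x = x}) :
    fixedIndMap ha (conjElem ha k • z) = k • fixedIndMap ha z := by
  induction z using Ind.induction_on with
  | mk n x =>
    apply Subtype.ext
    show Ind.mk G.subtype (a * (a⁻¹ * k * a * n)) x.1 = Ind.mk G.subtype (k * (a * n)) x.1
    congr 1
    group

theorem exists_conj_of_fixedIndMap_mk_eq (ha : a⁻¹ * g * a = s) (ha' : a'⁻¹ * g * a' = s')
    {n : centralizer {(s : H)}} {n' : centralizer {(s' : H)}}
    {x : {x : X // s • x = x}} {x' : {x : X // s' • x = x}}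
    (he : fixedIndMap ha (Ind.mk (centInc G s) n x) =
      fixedIndMap ha' (Ind.mk (centInc G s') n' x')) :
    ∃ m : G, a' * n' = a * n * (m : H)⁻¹ ∧ (x' : X) = m • (x : X) ∧
      s' = m * s * m⁻¹ := by
  obtain ⟨m, hq, hx⟩ := Ind.mk_eq_mk_iff.mp (congrArg Subtype.val he)
  refine ⟨m, hq, hx, Subtype.ext ?_⟩
  calc (s' : H) = (a' * n')⁻¹ * g * (a' * n') := (conj_mul_eq_of_mem_centralizer ha' n'.2).symm
    _ = m * ((a * n)⁻¹ * g * (a * n)) * (m : H)⁻¹ := by rw [hq]; simp only [coe_subtype]; group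
    _ = ↑(m * s * m⁻¹) := by rw [conj_mul_eq_of_mem_centralizer ha n.2]; simp

theorem isConj_of_fixedIndMap_eq (ha : a⁻¹ * g * a = s) (ha' : a'⁻¹ * g * a' = s')
    {z : Ind (centInc G s) {x : X // s • x = x}} {z' : Ind (centInc G s') {x : X // s' • x = x}}
    (he : fixedIndMap ha z = fixedIndMap ha' z') : IsConj s s' := by
  induction z using Ind.induction_on with
  | mk n x =>
    induction z' using Ind.induction_on with
    | mk n' x' =>
      obtain ⟨m, -, -, hm⟩ := exists_conj_of_fixedIndMap_mk_eq ha ha' he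
      exact isConj_iff.mpr ⟨m, hm.symm⟩

theorem fixedIndMap_injective (ha : a⁻¹ * g * a = s) :
    Function.Injective (fixedIndMap (X := X) ha) := by
  intro z z' he
  induction z using Ind.induction_on with
  | mk n x =>
    induction z' using Ind.induction_on with
    | mk n' x' =>
      obtain ⟨m, hn, hx, hm⟩ := exists_conj_of_fixedIndMap_mk_eq ha ha he
      have hmc : m ∈ centralizer {s} := by
        rw [mem_centralizer_singleton_iff]
        conv_rhs => rw [hm]
        group
      exact Ind.mk_eq_mk_iff.mpr
        ⟨⟨m, hmc⟩, Subtype.ext (mul_left_cancel (hn.trans (mul_assoc _ _ _))), Subtype.ext hx⟩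

theorem exists_fixedIndMap_eq_mk (ha : a⁻¹ * g * a = s) {q : H} {x : X}
    (hq : q⁻¹ * g * q = s) (hx : s • x = x) :
    ∃ z, (fixedIndMap ha z).1 = Ind.mk G.subtype q x := by
  have hn : a⁻¹ * q ∈ centralizer {(s : H)} := by
    rw [mem_centralizer_singleton_iff]
    calc a⁻¹ * q * s = a⁻¹ * g * q := by rw [← hq]; group
      _ = s * (a⁻¹ * q) := by rw [← ha]; group
  exact ⟨Ind.mk _ ⟨_, hn⟩ ⟨x, hx⟩, by rw [fixedIndMap_mk, mul_inv_cancel_left]⟩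

end Fixed

section Decomposition

variable {H : Type*} [Group H] {G : Subgroup H} {X : Type*} [MulAction G X] {g : H}
  {h : {c : ConjClasses G // IsConj g ((Quotient.out c : G) : H)} → H}
  (hh : ∀ c : {c : ConjClasses G // IsConj g ((Quotient.out c : G) : H)},
    (h c)⁻¹ * g * (h c) = ((Quotient.out c.1 : G) : H))

noncomputable def fixedIndSigmaMap
    (w : Σ c : {c : ConjClasses G // IsConj g ((Quotient.out c : G) : H)},
      Ind (centInc G (Quotient.out c.1)) {x : X // (Quotient.out c.1 : G) • x = x}) :
    {y : Ind G.subtype X // g • y = y} :=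
  fixedIndMap (hh w.1) w.2

theorem fixedIndSigmaMap_injective : Function.Injective (fixedIndSigmaMap (X := X) hh) := by
  rintro ⟨c, z⟩ ⟨c', z'⟩ he
  obtain rfl : c = c' :=
    Subtype.ext (Quotient.out_equiv_out.mp (isConj_of_fixedIndMap_eq (hh c) (hh c') he))
  exact congrArg (Sigma.mk c) (fixedIndMap_injective (hh c) he)

theorem fixedIndSigmaMap_surjective : Function.Surjective (fixedIndSigmaMap (X := X) hh) := by
  rintro ⟨y, hy⟩
  induction y using Ind.induction_on with
  | mk p x =>
    obtain ⟨k, hk, hx⟩ := Ind.smul_mk_eq_self_iff.mp hy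
    have hks : IsConj k (ConjClasses.mk k).out :=
      ConjClasses.mk_eq_mk_iff_isConj.mp (Quotient.out_eq (ConjClasses.mk k)).symm
    have hgk : IsConj g (k : H) := isConj_iff.mpr ⟨p⁻¹, by rw [inv_inv]; exact hk⟩
    let c : {c : ConjClasses G // IsConj g ((Quotient.out c : G) : H)} :=
      ⟨ConjClasses.mk k, hgk.trans (G.subtype.map_isConj hks)⟩
    obtain ⟨q, x', hpq, hq, hx'⟩ := Ind.exists_mk_eq_of_isConj hk hx hks
    obtain ⟨z, hz⟩ := exists_fixedIndMap_eq_mk (hh c) hq hx'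
    exact ⟨⟨c, z⟩, Subtype.ext (hz.trans hpq.symm)⟩

end Decomposition

theorem fixed_points_of_induced_decompose_general
    (H : Type) [Group H] (G : Subgroup H) (X : Type) [MulAction G X]
    (g : H)
    (h : {c : ConjClasses G // IsConj g ((Quotient.out c : G) : H)} → H)
    (hh : ∀ c : {c : ConjClasses G // IsConj g ((Quotient.out c : G) : H)},
      (h c)⁻¹ * g * (h c) = ((Quotient.out c.1 : G) : H)) :
    ∃ e : {y : Ind G.subtype X // g • y = y} ≃
        Σ c : {c : ConjClasses G // IsConj g ((Quotient.out c : G) : H)},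
          Ind (centInc G (Quotient.out c.1)) {x : X // (Quotient.out c.1 : G) • x = x},
      ∀ (k : Subgroup.centralizer ({g} : Set H)) (y : {y : Ind G.subtype X // g • y = y}),
        e (k • y) = ⟨(e y).1, conjElem (hh (e y).1) k • (e y).2⟩ := by
  let Φ := Equiv.ofBijective _ ⟨fixedIndSigmaMap_injective (X := X) hh,
    fixedIndSigmaMap_surjective hh⟩
  refine ⟨Φ.symm, fun k y => Φ.symm_apply_eq.mpr ?_⟩
  conv_lhs => rw [← Φ.apply_symm_apply y]
  exact (fixedIndMap_conjElem_smul _ k _).symm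

theorem fixed_points_of_induced_decompose
    (H : Type) [Group H] [Finite H] (G : Subgroup H) (X : Type) [MulAction G X] [Finite X]
    (g : H) (hg : g ∈ G)
    (h : {c : ConjClasses G // IsConj g ((Quotient.out c : G) : H)} → H)
    (hh : ∀ c : {c : ConjClasses G // IsConj g ((Quotient.out c : G) : H)},
      (h c)⁻¹ * g * (h c) = ((Quotient.out c.1 : G) : H)) :
    ∃ e : {y : Ind G.subtype X // g • y = y} ≃
        Σ c : {c : ConjClasses G // IsConj g ((Quotient.out c : G) : H)},
          Ind (centInc G (Quotient.out c.1)) {x : X // (Quotient.out c.1 : G) • x = x},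
      ∀ (k : Subgroup.centralizer ({g} : Set H)) (y : {y : Ind G.subtype X // g • y = y}),
        e (k • y) = ⟨(e y).1, conjElem (hh (e y).1) k • (e y).2⟩ :=
  fixed_points_of_induced_decompose_general H G X g h hh
end

section
/- For a finite group G acting on a finite set X, χ^(k)(X,G) equals (1/|G|) · Σ_{g ∈ G} χ^(k-1)(X^{⟨g⟩}, C_G(g)) · |G|/|C_G(g)| summed over conjugacy class representatives; equivalently, the two definitions of the higher order Euler characteristic agree: (1/|G|) Σ_{pairwise commuting (g₀,...,g_k)} |X^{⟨g₀,...,g_k⟩}| = Σ_{[g] ∈ Conj(G)} χ^(k-1)(X^{⟨g⟩}, C_G(g)). -/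
/-!
Split a commuting `(k+2)`-tuple with a common fixed point according to its first entry `g`: the
remaining entries form a commuting `(k+1)`-tuple in `C_G(g)` with a common fixed point in `X^g`.
Conjugating the whole tuple and the point shows that the number of such tuples with first entry
`g` only depends on the conjugacy class of `g`, and orbit–stabilizer, `|[g]| · |C_G(g)| = |G|`,
turns the average over `G` into a sum over conjugacy classes. For `k = 0`, Burnside's lemma
identifies `chiT 0` with the number of orbits, which starts the induction.
-/

open MulAction

theorem ConjClasses.nat_card_carrier_mul_nat_card_centralizer {G : Type*} [Group G] (g : G) :
    Nat.card (ConjClasses.mk g).carrier * Nat.card (Subgroup.centralizer {g}) = Nat.card G := by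
  rw [← ConjAct.orbit_eq_carrier_conjClasses, Subgroup.nat_card_centralizer_nat_card_stabilizer,
    ← Nat.card_prod, Nat.card_congr (orbitProdStabilizerEquivGroup (ConjAct G) g)]
  exact Nat.card_congr ConjAct.ofConjAct.toEquiv

theorem sum_eq_sum_conjClasses_card_nsmul {G M : Type*} [Group G] [Fintype G]
    [Fintype (ConjClasses G)] [AddCommMonoid M] {f : G → M}
    (hf : ∀ g h, IsConj g h → f g = f h) :
    ∑ g, f g = ∑ c : ConjClasses G, Nat.card c.carrier • f (Quotient.out c) := by
  classical
  rw [← Fintype.sum_fiberwise ConjClasses.mk f]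
  refine Finset.sum_congr rfl fun c _ => ?_
  have hfiber : ∀ g : {g // ConjClasses.mk g = c}, f g = f (Quotient.out c) := fun ⟨g, hg⟩ =>
    hf g _ (ConjClasses.mk_eq_mk_iff_isConj.mp (hg.trans c.out_eq.symm))
  rw [Fintype.sum_congr _ _ hfiber, Finset.sum_const, Finset.card_univ, ← Nat.card_eq_fintype_card,
    Nat.card_congr (Equiv.subtypeEquivRight fun g => ConjClasses.mem_carrier_iff_mk_eq)]

abbrev CommTuplesWithFixedPoint (k : ℕ) (G X : Type*) [Group G] [MulAction G X] : Type _ :=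
  {p : (Fin (k + 1) → G) × X // (∀ i j, Commute (p.1 i) (p.1 j)) ∧ ∀ i, p.1 i • p.2 = p.2}

lemma chiT_eq_card_div (k : ℕ) (G X : Type*) [Group G] [MulAction G X] :
    chiT k G X = Nat.card (CommTuplesWithFixedPoint k G X) / Nat.card G :=
  rfl

namespace CommTuplesWithFixedPoint

variable {G X : Type*} [Group G] [MulAction G X]

def congr {G' X' : Type*} [Group G'] [MulAction G' X'] (e : G ≃* G') (f : X ≃ X')
    (hf : ∀ (g : G) (x : X), f (g • x) = e g • f x) (k : ℕ) :
    CommTuplesWithFixedPoint k G X ≃ CommTuplesWithFixedPoint k G' X' :=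
  (Equiv.prodCongr ((Equiv.refl _).arrowCongr e.toEquiv) f).subtypeEquiv fun p => by
    simp only [Equiv.prodCongr_apply, Prod.map_fst, Prod.map_snd, Equiv.arrowCongr_apply,
      Equiv.refl_symm, Equiv.refl_apply, Function.comp_apply, MulEquiv.toEquiv_eq_coe,
      MulEquiv.coe_toEquiv, commute_iff_eq, ← map_mul, e.injective.eq_iff, ← hf, f.injective.eq_iff]

def head {k : ℕ} (p : CommTuplesWithFixedPoint k G X) : G := p.1.1 0

def headFiberEquiv (k : ℕ) (g : G) :
    {p : CommTuplesWithFixedPoint (k + 1) G X // p.head = g} ≃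
      CommTuplesWithFixedPoint k (Subgroup.centralizer {g}) {x : X // g • x = x} where
  toFun p := ⟨(fun i => ⟨p.1.1.1 i.succ, Subgroup.mem_centralizer_singleton_iff.mpr
        (by obtain ⟨p, rfl⟩ := p; exact p.2.1 i.succ 0)⟩,
      ⟨p.1.1.2, by obtain ⟨p, rfl⟩ := p; exact p.2.2 0⟩),
      fun i j => Subtype.ext (p.1.2.1 i.succ j.succ), fun i => Subtype.ext (p.1.2.2 i.succ)⟩
  invFun q := ⟨⟨(Fin.cons g fun i => q.1.1 i, q.1.2), by
      have hg : ∀ i, Commute g (q.1.1 i) := fun i =>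
        (Subgroup.mem_centralizer_singleton_iff.mp (q.1.1 i).2).symm
      refine ⟨fun i j => ?_, fun i => ?_⟩
      · cases i using Fin.cases <;> cases j using Fin.cases
        · exact Commute.refl g
        · exact hg _
        · exact (hg _).symm
        · exact congrArg Subtype.val (q.2.1 _ _)
      · cases i using Fin.cases
        · exact q.1.2.2
        · exact congrArg Subtype.val (q.2.2 _)⟩, rfl⟩
  left_inv p := by
    obtain ⟨⟨⟨t, x⟩, _⟩, rfl⟩ := p
    exact Subtype.ext (Subtype.ext (Prod.ext (Fin.cons_self_tail t) rfl))
  right_inv q := rfl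

lemma card_headFiber_conj (k : ℕ) (a g : G) :
    Nat.card {p : CommTuplesWithFixedPoint k G X // p.head = a * g * a⁻¹} =
      Nat.card {p : CommTuplesWithFixedPoint k G X // p.head = g} := by
  have hconj : ∀ (g : G) (x : X),
      MulAction.toPerm a (g • x) = MulAut.conj a g • MulAction.toPerm a x := fun g x => by
    simp [mul_smul]
  exact (Nat.card_congr ((congr (MulAut.conj a) (MulAction.toPerm a) hconj k).subtypeEquiv
    fun p => by simp [head, congr, MulAut.conj_apply])).symm

def zeroEquiv : CommTuplesWithFixedPoint 0 G X ≃ {p : G × X // p.1 • p.2 = p.2} :=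
  ((Equiv.funUnique (Fin 1) G).prodCongr (Equiv.refl X)).subtypeEquiv fun p => by
    simp [Fin.forall_fin_one]

lemma card_zero : Nat.card (CommTuplesWithFixedPoint 0 G X) = numOrbits G X * Nat.card G := by
  rw [numOrbits, ← Nat.card_prod]
  exact Nat.card_congr (zeroEquiv.trans ((Equiv.subtypeProdEquivSigmaSubtype _).trans
    (sigmaFixedByEquivOrbitsProdGroup G X)))

lemma card_succ [Fintype G] [Finite X] (k : ℕ) :
    Nat.card (CommTuplesWithFixedPoint (k + 1) G X) =
      ∑ g : G, Nat.card {p : CommTuplesWithFixedPoint (k + 1) G X // p.head = g} := by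
  rw [← Nat.card_sigma, Nat.card_congr (Equiv.sigmaFiberEquiv head)]

end CommTuplesWithFixedPoint

open CommTuplesWithFixedPoint

theorem chiT_zero (G X : Type*) [Group G] [Finite G] [MulAction G X] :
    chiT 0 G X = numOrbits G X := by
  have : (Nat.card G : ℚ) ≠ 0 := Nat.cast_ne_zero.mpr Nat.card_pos.ne'
  rw [chiT_eq_card_div, card_zero, Nat.cast_mul, mul_div_cancel_right₀ _ this]

theorem chiT_succ (G X : Type*) [Group G] [Finite G] [MulAction G X] [Finite X] (k : ℕ) :
    chiT (k + 1) G X = ∑ᶠ c : ConjClasses G,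
      chiT k (Subgroup.centralizer {Quotient.out c}) {x : X // Quotient.out c • x = x} := by
  classical
  cases nonempty_fintype G
  let fiber (g : G) : ℚ := Nat.card {p : CommTuplesWithFixedPoint (k + 1) G X // p.head = g}
  have hfiber : ∀ g h, IsConj g h → fiber g = fiber h := by
    intro g h hgh
    obtain ⟨a, rfl⟩ := isConj_iff.mp hgh
    exact congrArg Nat.cast (card_headFiber_conj (k + 1) a g).symm
  have hchiT : ∀ g : G, chiT k (Subgroup.centralizer {g}) {x : X // g • x = x} =
      fiber g / Nat.card (Subgroup.centralizer {g}) := fun g => by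
    rw [chiT_eq_card_div, ← Nat.card_congr (headFiberEquiv k g)]
  have hclass : ∀ c : ConjClasses G, (Nat.card c.carrier : ℚ) / Nat.card G =
      1 / Nat.card (Subgroup.centralizer {Quotient.out c}) := fun c => by
    have h := ConjClasses.nat_card_carrier_mul_nat_card_centralizer (Quotient.out c)
    rw [show ConjClasses.mk (Quotient.out c) = c from c.out_eq] at h
    have : (Nat.card (Subgroup.centralizer {Quotient.out c}) : ℚ) ≠ 0 :=
      Nat.cast_ne_zero.mpr Nat.card_pos.ne'
    rw [div_eq_div_iff (Nat.cast_ne_zero.mpr Nat.card_pos.ne') this, one_mul, ← Nat.cast_mul, h]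
  calc chiT (k + 1) G X = (∑ g, fiber g) / Nat.card G := by
        rw [chiT_eq_card_div, card_succ, Nat.cast_sum]
    _ = ∑ c : ConjClasses G, (Nat.card c.carrier : ℚ) / Nat.card G * fiber (Quotient.out c) := by
        rw [sum_eq_sum_conjClasses_card_nsmul hfiber, Finset.sum_div]
        simp only [nsmul_eq_mul, div_mul_eq_mul_div]
    _ = _ := by
        simp only [finsum_eq_sum_of_fintype, hchiT, hclass, one_div_mul_eq_div]

lemma chiRec_eq_chiT (k : ℕ) :
    ∀ (G : Type) [Group G] [Finite G] (X : Type) [MulAction G X] [Finite X],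
      chiRec k G X = chiT k G X := by
  induction k with
  | zero => exact fun G _ _ X _ _ => (chiT_zero G X).symm
  | succ k ih =>
    intro G _ _ X _ _
    rw [chiT_succ]
    exact finsum_congr fun c => ih _ _

theorem tuple_def_eq_recursive_def
    (G : Type) [Group G] [Finite G] (X : Type) [MulAction G X] [Finite X]
    (k : ℕ) (hk : 1 ≤ k) :
    chiT k G X = ∑ᶠ c : ConjClasses G,
      chiRec (k - 1) (Subgroup.centralizer ({Quotient.out c} : Set G))
        {x : X // Quotient.out c • x = x} := by
  obtain ⟨m, rfl⟩ := Nat.exists_eq_add_of_le' hk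
  exact (chiRec_eq_chiT (m + 1) G X).symm
end

section
/- In the ring of formal power series with integer coefficients, the Macdonald-type identity for wreath products of the one-point set holds for k = 1: 1 + Σ_{n≥1} χ^(1)(pt^n, G_n) tⁿ = Π_{r≥1} (1 - t^r)^{-χ^(1)(pt,G)}, where G_n = G^n ⋊ S_n is the wreath product acting on the n-th Cartesian power of the one-point G-set pt; that is, the generating series 1 + Σ_{n≥1} c(G_n) tⁿ of the numbers c(G_n) of conjugacy classes of the wreath products G_n equals Π_{r≥1}(1-t^r)^{-c(G)}, where c(G) is the number of conjugacy classes of G. -/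
open MulAction

section Wreath

variable (G : Type*) [Group G] (ι : Type*)

/-- Permutations of `ι` act on `ι → G` by automorphisms (permuting the factors). -/
def permAut : Equiv.Perm ι →* MulAut (ι → G) where
  toFun σ :=
    { toEquiv := Equiv.arrowCongr σ (Equiv.refl G)
      map_mul' := fun v w => rfl }
  map_one' := by ext v i; rfl
  map_mul' σ τ := by ext v i; rfl

/-- The wreath product `G_ι = G^ι ⋊ Perm ι`. -/
def Wr : Type _ := (ι → G) ⋊[permAut G ι] Equiv.Perm ι

instance : Group (Wr G ι) := inferInstanceAs (Group ((ι → G) ⋊[permAut G ι] Equiv.Perm ι))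

variable {G ι}

/-- The `G^ι`-component of an element of the wreath product. -/
def Wr.l (w : Wr G ι) : ι → G := SemidirectProduct.left w

/-- The `Perm ι`-component of an element of the wreath product. -/
def Wr.p (w : Wr G ι) : Equiv.Perm ι := SemidirectProduct.right w

/-- Building an element of the wreath product from its two components. -/
def Wr.mk (v : ι → G) (σ : Equiv.Perm ι) : Wr G ι := ⟨v, σ⟩

@[simp] lemma Wr.l_mk (v : ι → G) (σ : Equiv.Perm ι) : (Wr.mk v σ).l = v := rfl
@[simp] lemma Wr.p_mk (v : ι → G) (σ : Equiv.Perm ι) : (Wr.mk v σ).p = σ := rfl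
@[simp] lemma Wr.l_one : (1 : Wr G ι).l = 1 := rfl
@[simp] lemma Wr.p_one : (1 : Wr G ι).p = 1 := rfl
@[simp] lemma Wr.l_mul (a b : Wr G ι) : (a * b).l = a.l * fun i => b.l (a.p.symm i) := rfl
@[simp] lemma Wr.p_mul (a b : Wr G ι) : (a * b).p = a.p * b.p := rfl

variable (G ι)

/-- The natural action of the wreath product `G_ι` on `X^ι`:
`S_ι` permutes the factors and `G^ι` acts componentwise. -/
instance wrAction (X : Type*) [MulAction G X] : MulAction (Wr G ι) (ι → X) where
  smul w y := fun i => w.l i • y (w.p.symm i)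
  one_smul y := funext fun i => by
    show (1 : Wr G ι).l i • y ((1 : Wr G ι).p.symm i) = y i
    simp <;> rfl
  mul_smul a b y := funext fun i => by
    show (a * b).l i • y ((a * b).p.symm i) =
      a.l i • b.l (a.p.symm i) • y (b.p.symm (a.p.symm i))
    rw [Wr.l_mul, Wr.p_mul, Pi.mul_apply, mul_smul]
    rfl

@[simp] lemma wr_smul_apply {X : Type*} [MulAction G X] (w : Wr G ι) (y : ι → X) (i : ι) :
    (w • y) i = w.l i • y (w.p.symm i) := rfl

end Wreath
section Classification

open Equiv Function MulAction Subgroup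

namespace WrC

variable {G : Type} [Group G] {ι : Type} [Finite ι]

/-! ### Periods of permutations -/

/-- period of `i` under `σ` -/
noncomputable def per (σ : Equiv.Perm ι) (i : ι) : ℕ := Function.minimalPeriod σ i

lemma isPeriodic (σ : Equiv.Perm ι) (i : ι) : Function.IsPeriodicPt σ (orderOf σ) i := by
  show (⇑σ)^[orderOf σ] i = i
  rw [← Equiv.Perm.coe_pow, pow_orderOf_eq_one]; rfl

lemma per_pos (σ : Equiv.Perm ι) (i : ι) : 0 < per σ i :=
  (isPeriodic σ i).minimalPeriod_pos (orderOf_pos σ)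

lemma pow_per (σ : Equiv.Perm ι) (i : ι) : (σ ^ per σ i) i = i := by
  rw [Equiv.Perm.coe_pow]; exact Function.iterate_minimalPeriod

lemma per_dvd_iff (σ : Equiv.Perm ι) (i : ι) (k : ℕ) : (σ ^ k) i = i ↔ per σ i ∣ k := by
  rw [Equiv.Perm.coe_pow]
  exact Function.isPeriodicPt_iff_minimalPeriod_dvd

lemma zpow_eq_pow (σ : Equiv.Perm ι) (z : ℤ) : ∃ k : ℕ, σ ^ z = σ ^ k := by
  refine ⟨(z % (orderOf σ : ℤ)).toNat, ?_⟩
  have hN : 0 < orderOf σ := orderOf_pos σ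
  have hnn : 0 ≤ z % (orderOf σ : ℤ) :=
    Int.emod_nonneg z (by exact_mod_cast hN.ne')
  conv_lhs => rw [← Int.emod_add_mul_ediv z (orderOf σ : ℤ)]
  rw [zpow_add, zpow_mul, zpow_natCast, pow_orderOf_eq_one, one_zpow, mul_one,
    ← zpow_natCast σ, Int.toNat_of_nonneg hnn]

lemma mem_orbit_iff_pow {σ : Equiv.Perm ι} {i j : ι} :
    j ∈ MulAction.orbit (Subgroup.zpowers σ) i ↔ ∃ k : ℕ, (σ ^ k) i = j := by
  constructor
  · rintro ⟨⟨g, hg⟩, rfl⟩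
    obtain ⟨z, rfl⟩ := Subgroup.mem_zpowers_iff.mp hg
    obtain ⟨k, hk⟩ := zpow_eq_pow σ z
    exact ⟨k, by simp [Subgroup.smul_def, Equiv.Perm.smul_def, hk]⟩
  · rintro ⟨k, rfl⟩
    exact ⟨⟨σ ^ k, Subgroup.mem_zpowers_iff.mpr ⟨(k : ℤ), zpow_natCast σ k⟩⟩,
      by simp [Subgroup.smul_def, Equiv.Perm.smul_def]⟩

lemma per_pow_apply (σ : Equiv.Perm ι) (k : ℕ) (i : ι) : per σ ((σ ^ k) i) = per σ i := by
  have key : ∀ m : ℕ, (σ ^ m) ((σ ^ k) i) = (σ ^ k) i ↔ (σ ^ m) i = i := by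
    intro m
    have hc : σ ^ m * σ ^ k = σ ^ k * σ ^ m := by
      rw [← pow_add, ← pow_add, add_comm]
    rw [← Equiv.Perm.mul_apply, hc, Equiv.Perm.mul_apply]
    exact (σ ^ k).injective.eq_iff
  exact Nat.dvd_antisymm
    ((per_dvd_iff _ _ _).1 ((key _).2 (pow_per σ i)))
    ((per_dvd_iff _ _ _).1 ((key _).1 (pow_per σ _)))

/-! ### powers in the wreath product -/

lemma Wr_p_pow (x : Wr G ι) (k : ℕ) : (x ^ k).p = x.p ^ k := by
  induction k with
  | zero => rw [pow_zero, pow_zero]; exact Wr.p_one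
  | succ k ih => rw [pow_succ, Wr.p_mul, ih, pow_succ]

lemma Wr_l_pow_succ (x : Wr G ι) (k : ℕ) (a : ι) :
    (x ^ (k + 1)).l ((x.p ^ (k + 1)) a) =
      x.l ((x.p ^ (k + 1)) a) * (x ^ k).l ((x.p ^ k) a) := by
  have h1 : x ^ (k + 1) = x * x ^ k := by rw [pow_succ']
  rw [h1, Wr.l_mul]
  simp only [Pi.mul_apply]
  congr 2
  have : (x.p ^ (k + 1)) a = x.p ((x.p ^ k) a) := by
    rw [pow_succ', Equiv.Perm.mul_apply]
  rw [this, Equiv.symm_apply_apply]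

/-! ### cycle products -/

noncomputable def cyc (x : Wr G ι) (i : ι) : G := (x ^ per x.p i).l i

noncomputable def ccls (x : Wr G ι) (i : ι) : ConjClasses G := ConjClasses.mk (cyc x i)

lemma cyc_apply (x : Wr G ι) (i : ι) :
    cyc x (x.p i) = x.l (x.p i) * cyc x i * (x.l (x.p i))⁻¹ := by
  set r := per x.p i with hr
  have hper : per x.p (x.p i) = r := by
    simpa using per_pow_apply x.p 1 i
  have hfix : (x.p ^ r) i = i := pow_per x.p i
  have hcomm : x * x ^ r = x ^ r * x := (Commute.refl x).pow_right r
  have hL : (x * x ^ r).l (x.p i) = x.l (x.p i) * cyc x i := by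
    rw [Wr.l_mul]
    simp only [Pi.mul_apply]
    rw [Equiv.symm_apply_apply]
    rfl
  have hfix2 : ((x ^ r).p).symm (x.p i) = x.p i := by
    rw [Wr_p_pow]
    apply (x.p ^ r).injective
    rw [Equiv.apply_symm_apply]
    have : (x.p ^ r) (x.p i) = x.p ((x.p ^ r) i) := by
      rw [← Equiv.Perm.mul_apply, ← Equiv.Perm.mul_apply, ← pow_succ, ← pow_succ']
    rw [this, hfix]
  have hR : (x ^ r * x).l (x.p i) = cyc x (x.p i) * x.l (x.p i) := by
    rw [Wr.l_mul]
    simp only [Pi.mul_apply]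
    rw [hfix2]
    unfold cyc
    rw [hper]
  have heq : x.l (x.p i) * cyc x i = cyc x (x.p i) * x.l (x.p i) := by
    rw [← hL, ← hR, hcomm]
  exact eq_mul_inv_of_mul_eq heq.symm

lemma ccls_apply (x : Wr G ι) (i : ι) : ccls x (x.p i) = ccls x i := by
  unfold ccls
  rw [ConjClasses.mk_eq_mk_iff_isConj, cyc_apply]
  exact (isConj_iff.mpr ⟨x.l (x.p i), rfl⟩).symm

lemma ccls_pow_apply (x : Wr G ι) (k : ℕ) (i : ι) : ccls x ((x.p ^ k) i) = ccls x i := by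
  induction k with
  | zero => rw [pow_zero]; rfl
  | succ k ih =>
    have : (x.p ^ (k + 1)) i = x.p ((x.p ^ k) i) := by
      rw [pow_succ', Equiv.Perm.mul_apply]
    rw [this, ccls_apply, ih]

lemma per_of_mem_orbit {σ : Equiv.Perm ι} {i j : ι}
    (h : j ∈ MulAction.orbit (Subgroup.zpowers σ) i) : per σ j = per σ i := by
  obtain ⟨k, rfl⟩ := mem_orbit_iff_pow.mp h
  exact per_pow_apply σ k i

lemma ccls_of_mem_orbit {x : Wr G ι} {i j : ι}
    (h : j ∈ MulAction.orbit (Subgroup.zpowers x.p) i) : ccls x j = ccls x i := by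
  obtain ⟨k, rfl⟩ := mem_orbit_iff_pow.mp h
  exact ccls_pow_apply x k i

/-! ### types -/

noncomputable def Dm (x : Wr G ι) : MulAction.orbitRel.Quotient (Subgroup.zpowers x.p) ι →
    ℕ × ConjClasses G :=
  fun O => (per x.p O.out, ccls x O.out)

noncomputable def wtype (x : Wr G ι) : ℕ × ConjClasses G → ℕ :=
  fun pr => Nat.card {O : MulAction.orbitRel.Quotient (Subgroup.zpowers x.p) ι // Dm x O = pr}

lemma qout_rel (σ : Equiv.Perm ι) (i : ι) :
    (Quotient.mk'' i : MulAction.orbitRel.Quotient (Subgroup.zpowers σ) ι).out ∈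
      MulAction.orbit (Subgroup.zpowers σ) i :=
  MulAction.orbitRel_apply.mp (Quotient.exact' (Quotient.out_eq' _))

lemma Dm_mk (x : Wr G ι) (i : ι) :
    Dm x (Quotient.mk'' i) = (per x.p i, ccls x i) := by
  unfold Dm
  rw [per_of_mem_orbit (qout_rel x.p i), ccls_of_mem_orbit (qout_rel x.p i)]

end WrC
end Classification
section Master

open Equiv Function MulAction Subgroup
namespace WrC

variable {G : Type} [Group G] {ι : Type} [Finite ι] {κ : Type} [Finite κ]

theorem wtype_master (e : ι ≃ κ) (u : κ → G) (x : Wr G ι) (y : Wr G κ)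
    (H1 : ∀ i, y.p (e i) = e (x.p i))
    (H2 : ∀ i, u (e (x.p i)) * x.l (x.p i) = y.l (e (x.p i)) * u (e i)) :
    wtype y = wtype x := by
  have K1 : ∀ (k : ℕ) (i : ι), (y.p ^ k) (e i) = e ((x.p ^ k) i) := by
    intro k
    induction k with
    | zero => intro i; simp
    | succ k ih =>
      intro i
      rw [pow_succ, Equiv.Perm.mul_apply, H1, ih, ← Equiv.Perm.mul_apply, ← pow_succ]
  have K3 : ∀ i, per y.p (e i) = per x.p i := by
    intro i
    apply Nat.dvd_antisymm
    · rw [← per_dvd_iff]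
      rw [K1, pow_per]
    · rw [← per_dvd_iff x.p i]
      apply e.injective
      rw [← K1, pow_per]
  have K2 : ∀ (k : ℕ) (i : ι),
      u (e ((x.p ^ k) i)) * (x ^ k).l ((x.p ^ k) i)
        = (y ^ k).l ((y.p ^ k) (e i)) * u (e i) := by
    intro k
    induction k with
    | zero => intro i; simp [pow_zero]
    | succ k ih =>
      intro i
      have hxp : (x.p ^ (k + 1)) i = x.p ((x.p ^ k) i) := by
        rw [pow_succ', Equiv.Perm.mul_apply]
      rw [Wr_l_pow_succ x k i, Wr_l_pow_succ y k (e i), K1 (k + 1) i]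
      have h2 := H2 ((x.p ^ k) i)
      rw [← hxp] at h2
      rw [← mul_assoc, h2, mul_assoc, ih i, ← mul_assoc]
  have K4 : ∀ i, cyc y (e i) * u (e i) = u (e i) * cyc x i := by
    intro i
    have h := K2 (per x.p i) i
    rw [pow_per, K1, pow_per] at h
    unfold cyc
    rw [K3 i]
    exact h.symm
  have K4c : ∀ i, ccls y (e i) = ccls x i := by
    intro i
    unfold ccls
    rw [ConjClasses.mk_eq_mk_iff_isConj]
    refine isConj_iff.mpr ⟨(u (e i))⁻¹, ?_⟩
    rw [inv_inv, mul_assoc, K4 i, ← mul_assoc, inv_mul_cancel, one_mul]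
  have hrel : ∀ a b : ι, (MulAction.orbitRel (Subgroup.zpowers x.p) ι) a b ↔
      (MulAction.orbitRel (Subgroup.zpowers y.p) κ) (e a) (e b) := by
    intro a b
    rw [MulAction.orbitRel_apply, MulAction.orbitRel_apply,
      mem_orbit_iff_pow, mem_orbit_iff_pow]
    exact exists_congr fun k => by rw [K1, e.apply_eq_iff_eq]
  let E := Quotient.congr e hrel
  have hE : ∀ O, Dm y (E O) = Dm x O := by
    intro O
    induction O using Quotient.inductionOn' with
    | h i =>
      have hmk : E (Quotient.mk'' i) = Quotient.mk'' (e i) := rfl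
      rw [hmk, Dm_mk, Dm_mk, K3, K4c]
  funext pr
  exact Nat.card_congr (Equiv.subtypeEquiv E (fun O => by rw [hE O])).symm

theorem wtype_semiconj {x y h : Wr G ι} (hs : h * x = y * h) : wtype y = wtype x := by
  have hp : ∀ i, y.p (h.p i) = h.p (x.p i) := by
    intro i
    have := congrArg Wr.p hs
    rw [Wr.p_mul, Wr.p_mul] at this
    rw [← Equiv.Perm.mul_apply, ← this, Equiv.Perm.mul_apply]
  apply wtype_master (h.p : ι ≃ ι) h.l x y hp
  intro i
  have := congrArg Wr.l hs
  have hl := congrFun this (h.p (x.p i))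
  rw [Wr.l_mul, Wr.l_mul] at hl
  simp only [Pi.mul_apply] at hl
  rw [Equiv.symm_apply_apply] at hl
  have hy : (y.p).symm (h.p (x.p i)) = h.p i := by
    apply y.p.injective
    rw [Equiv.apply_symm_apply, hp]
  rw [hy] at hl
  exact hl

/-- transport of a wreath element along an equivalence of index types. -/
def transport (e : ι ≃ κ) (x : Wr G ι) : Wr G κ :=
  Wr.mk (fun j => x.l (e.symm j)) ((e.symm.trans x.p).trans e)

theorem wtype_transport (e : ι ≃ κ) (x : Wr G ι) : wtype (transport e x) = wtype x := by
  apply wtype_master e (fun _ => (1 : G)) x (transport e x)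
  · intro i
    show e (x.p (e.symm (e i))) = e (x.p i)
    rw [Equiv.symm_apply_apply]
  · intro i
    show 1 * x.l (x.p i) = x.l (e.symm (e (x.p i))) * 1
    rw [Equiv.symm_apply_apply, one_mul, mul_one]

end WrC
end Master
section IdxMachinery

open Equiv Function MulAction Subgroup
namespace WrC

variable {G : Type} [Group G] {ι : Type} [Finite ι]

/-- base point of the orbit of `i` under `σ`. -/
noncomputable def bpt (σ : Equiv.Perm ι) (i : ι) : ι :=
  (Quotient.mk'' i : MulAction.orbitRel.Quotient (Subgroup.zpowers σ) ι).out

lemma bpt_exists (σ : Equiv.Perm ι) (i : ι) : ∃ k : ℕ, (σ ^ k) (bpt σ i) = i := by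
  have h2 : (MulAction.orbitRel (Subgroup.zpowers σ) ι) (bpt σ i) i :=
    MulAction.orbitRel_apply.mpr (qout_rel σ i)
  exact mem_orbit_iff_pow.mp (MulAction.orbitRel_apply.mp (Setoid.symm' _ h2))

/-- the index of `i` along its orbit, counted from the base point. -/
noncomputable def idx (σ : Equiv.Perm ι) (i : ι) : ℕ :=
  @Nat.find (fun k => (σ ^ k) (bpt σ i) = i) (Classical.decPred _) (bpt_exists σ i)

lemma idx_spec (σ : Equiv.Perm ι) (i : ι) : (σ ^ idx σ i) (bpt σ i) = i :=
  @Nat.find_spec (fun k => (σ ^ k) (bpt σ i) = i) (Classical.decPred _) (bpt_exists σ i)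

lemma idx_min' (σ : Equiv.Perm ι) (i : ι) {k : ℕ} (h : (σ ^ k) (bpt σ i) = i) : idx σ i ≤ k :=
  @Nat.find_min' (fun k => (σ ^ k) (bpt σ i) = i) (Classical.decPred _) (bpt_exists σ i) k h

lemma pow_mod_per (σ : Equiv.Perm ι) (b : ι) (k : ℕ) :
    (σ ^ (k % per σ b)) b = (σ ^ k) b := by
  conv_rhs => rw [← Nat.mod_add_div k (per σ b)]
  rw [pow_add, Equiv.Perm.mul_apply]
  congr 1
  exact ((per_dvd_iff σ b _).mpr (Dvd.intro _ rfl)).symm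

lemma idx_lt (σ : Equiv.Perm ι) (i : ι) : idx σ i < per σ (bpt σ i) := by
  obtain ⟨k, hk⟩ := bpt_exists σ i
  have h2 : (σ ^ (k % per σ (bpt σ i))) (bpt σ i) = i := by rw [pow_mod_per]; exact hk
  exact lt_of_le_of_lt (idx_min' σ i h2) (Nat.mod_lt _ (per_pos _ _))

lemma idx_unique {σ : Equiv.Perm ι} {i : ι} {k : ℕ} (hk : k < per σ (bpt σ i))
    (h : (σ ^ k) (bpt σ i) = i) : k = idx σ i := by
  have h1 : idx σ i ≤ k := idx_min' σ i h
  rcases eq_or_lt_of_le h1 with heq | hlt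
  · exact heq.symm
  exfalso
  have hfix : (σ ^ (k - idx σ i)) (bpt σ i) = bpt σ i := by
    apply (σ ^ idx σ i).injective
    rw [← Equiv.Perm.mul_apply, ← pow_add, Nat.add_sub_cancel' h1, h, idx_spec]
  have hdvd := (per_dvd_iff _ _ _).mp hfix
  have hpos : 0 < k - idx σ i := Nat.sub_pos_of_lt hlt
  have hlt2 : k - idx σ i < per σ (bpt σ i) := lt_of_le_of_lt (Nat.sub_le _ _) hk
  exact absurd (Nat.le_of_dvd hpos hdvd) (not_le.mpr hlt2)

lemma mk_pow_eq (σ : Equiv.Perm ι) (k : ℕ) (i : ι) :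
    (Quotient.mk'' ((σ ^ k) i) : MulAction.orbitRel.Quotient (Subgroup.zpowers σ) ι) =
      Quotient.mk'' i :=
  Quotient.sound' (MulAction.orbitRel_apply.mpr (mem_orbit_iff_pow.mpr ⟨k, rfl⟩))

lemma mk_bpt_eq (σ : Equiv.Perm ι) (i : ι) :
    (Quotient.mk'' (bpt σ i) : MulAction.orbitRel.Quotient (Subgroup.zpowers σ) ι) =
      Quotient.mk'' i :=
  Quotient.out_eq' _

end WrC
end IdxMachinery
section Converse

open Equiv Function MulAction Subgroup
namespace WrC

variable {G : Type} [Group G] {ι : Type} [Finite ι]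

theorem isConj_of_wtype_eq {x y : Wr G ι} (hw : wtype x = wtype y) : IsConj x y := by
  classical
  have hfib : ∀ pr : ℕ × ConjClasses G,
      Nonempty ({O : MulAction.orbitRel.Quotient (Subgroup.zpowers x.p) ι // Dm x O = pr} ≃
        {O' : MulAction.orbitRel.Quotient (Subgroup.zpowers y.p) ι // Dm y O' = pr}) :=
    fun pr => Finite.card_eq.mp (congrFun hw pr)
  obtain ⟨F, hF⟩ : ∃ F : MulAction.orbitRel.Quotient (Subgroup.zpowers x.p) ι ≃
      MulAction.orbitRel.Quotient (Subgroup.zpowers y.p) ι, ∀ O, Dm y (F O) = Dm x O := by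
    refine ⟨(Equiv.sigmaFiberEquiv (Dm x)).symm.trans
      ((Equiv.sigmaCongrRight fun pr => (hfib pr).some).trans
        (Equiv.sigmaFiberEquiv (Dm y))), fun O => ?_⟩
    exact Subtype.prop ((hfib (Dm x O)).some ⟨O, rfl⟩)
  let π : ι → ι := fun i => (y.p ^ idx x.p i) ((F (Quotient.mk'' i)).out)
  have hπdef : ∀ i, π i = (y.p ^ idx x.p i) ((F (Quotient.mk'' i)).out) := fun _ => rfl
  have hmkπ : ∀ i, (Quotient.mk'' (π i) :
      MulAction.orbitRel.Quotient (Subgroup.zpowers y.p) ι) = F (Quotient.mk'' i) := by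
    intro i
    have h1 := mk_pow_eq y.p (idx x.p i) ((F (Quotient.mk'' i)).out)
    rw [hπdef, h1, Quotient.out_eq']
  have hperF : ∀ i, per y.p ((F (Quotient.mk'' i)).out) = per x.p (bpt x.p i) :=
    fun i => congrArg Prod.fst (hF (Quotient.mk'' i))
  have hbptπ : ∀ i, bpt y.p (π i) = (F (Quotient.mk'' i)).out := by
    intro i
    show (Quotient.mk'' (π i) :
      MulAction.orbitRel.Quotient (Subgroup.zpowers y.p) ι).out = _
    rw [hmkπ]
  have hidxπ : ∀ i, idx y.p (π i) = idx x.p i := by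
    intro i
    refine (idx_unique ?_ ?_).symm
    · rw [hbptπ, hperF]
      exact idx_lt x.p i
    · rw [hbptπ]
  have hπinj : Function.Injective π := by
    intro i i' h
    have hFO : F (Quotient.mk'' i) = F (Quotient.mk'' i') := by
      rw [← hmkπ, ← hmkπ, h]
    have hO : (Quotient.mk'' i :
        MulAction.orbitRel.Quotient (Subgroup.zpowers x.p) ι) = Quotient.mk'' i' :=
      F.injective hFO
    have hbeq : bpt x.p i = bpt x.p i' := congrArg Quotient.out hO
    have hidx : idx x.p i = idx x.p i' := by
      have e1 := hidxπ i
      have e2 := hidxπ i'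
      rw [← e1, ← e2, h]
    rw [← idx_spec x.p i, ← idx_spec x.p i', hidx, hbeq]
  let e : Equiv.Perm ι := Equiv.ofBijective π (Finite.injective_iff_bijective.mp hπinj)
  have he : ∀ i, e i = π i := fun _ => rfl
  have H1 : ∀ i, π (x.p i) = y.p (π i) := by
    intro i
    have hmkσ : (Quotient.mk'' (x.p i) :
        MulAction.orbitRel.Quotient (Subgroup.zpowers x.p) ι) = Quotient.mk'' i := by
      have := mk_pow_eq x.p 1 i
      rwa [pow_one] at this
    have hbσ : bpt x.p (x.p i) = bpt x.p i := congrArg Quotient.out hmkσ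
    have hrτ : per y.p ((F (Quotient.mk'' i)).out) = per x.p (bpt x.p i) := hperF i
    by_cases hcase : idx x.p i + 1 < per x.p (bpt x.p i)
    · have hspec : (x.p ^ (idx x.p i + 1)) (bpt x.p (x.p i)) = x.p i := by
        rw [hbσ, pow_succ', Equiv.Perm.mul_apply, idx_spec]
      have hidx1 : idx x.p i + 1 = idx x.p (x.p i) :=
        idx_unique (by rw [hbσ]; exact hcase) hspec
      rw [hπdef (x.p i), hπdef i, ← hidx1, hmkσ, pow_succ', Equiv.Perm.mul_apply]
    · have hk1 : idx x.p i + 1 = per x.p (bpt x.p i) := by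
        have := idx_lt x.p i
        omega
      have hσib : x.p i = bpt x.p i := by
        have h3 : (x.p ^ (idx x.p i + 1)) (bpt x.p i) = x.p i := by
          rw [pow_succ', Equiv.Perm.mul_apply, idx_spec]
        rw [hk1] at h3
        rw [← h3, pow_per]
      have hidx0 : (0 : ℕ) = idx x.p (x.p i) := by
        apply idx_unique
        · rw [hbσ]
          exact per_pos _ _
        · rw [pow_zero, hbσ]
          simpa using hσib.symm
      rw [hπdef (x.p i), hπdef i, ← hidx0, hmkσ, pow_zero]
      have h4 : y.p ((y.p ^ idx x.p i) ((F (Quotient.mk'' i)).out)) =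
          (y.p ^ (idx x.p i + 1)) ((F (Quotient.mk'' i)).out) := by
        rw [pow_succ', Equiv.Perm.mul_apply]
      rw [h4, hk1, ← hrτ, pow_per]
      simp
  have hconj : ∀ O' : MulAction.orbitRel.Quotient (Subgroup.zpowers y.p) ι,
      ∃ c : G, c * cyc x ((F.symm O').out) * c⁻¹ = cyc y O'.out := by
    intro O'
    apply isConj_iff.mp
    apply ConjClasses.mk_eq_mk_iff_isConj.mp
    have h5 := congrArg Prod.snd (hF (F.symm O'))
    rw [Equiv.apply_symm_apply] at h5
    exact h5.symm
  choose g hg using hconj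
  have hg' : ∀ O', g O' * cyc x ((F.symm O').out) = cyc y O'.out * g O' := by
    intro O'
    exact mul_inv_eq_iff_eq_mul.mp (hg O')
  let u : ι → G := fun j =>
    (y ^ idx y.p j).l j * g (Quotient.mk'' j) *
      ((x ^ idx y.p j).l ((x.p ^ idx y.p j) ((F.symm (Quotient.mk'' j)).out)))⁻¹
  have hu : ∀ i, u (π i) =
      (y ^ idx x.p i).l (π i) * g (F (Quotient.mk'' i)) *
        ((x ^ idx x.p i).l ((x.p ^ idx x.p i) (bpt x.p i)))⁻¹ := by
    intro i
    show (y ^ idx y.p (π i)).l (π i) * g (Quotient.mk'' (π i)) *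
      ((x ^ idx y.p (π i)).l ((x.p ^ idx y.p (π i))
        ((F.symm (Quotient.mk'' (π i))).out)))⁻¹ = _
    rw [hidxπ i, hmkπ i, Equiv.symm_apply_apply]
    rfl
  have mainEq : ∀ i, u (π i) * x.l i = y.l (π i) * u (π (x.p⁻¹ i)) := by
    intro i
    have hmkinv : (Quotient.mk'' (x.p⁻¹ i) :
        MulAction.orbitRel.Quotient (Subgroup.zpowers x.p) ι) = Quotient.mk'' i := by
      have := mk_pow_eq x.p 1 (x.p⁻¹ i)
      rw [pow_one, (show ∀ (f : Equiv.Perm ι) (a : ι), f (f⁻¹ a) = a from fun f a => f.apply_symm_apply a)] at this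
      exact this.symm
    have hbinv : bpt x.p (x.p⁻¹ i) = bpt x.p i := congrArg Quotient.out hmkinv
    have hk : idx x.p i < per x.p (bpt x.p i) := idx_lt x.p i
    have hrpos : 0 < per x.p (bpt x.p i) := per_pos _ _
    have hgg : g (F (Quotient.mk'' i)) * cyc x (bpt x.p i) =
        cyc y ((F (Quotient.mk'' i)).out) * g (F (Quotient.mk'' i)) := by
      have := hg' (F (Quotient.mk'' i))
      rwa [Equiv.symm_apply_apply] at this
    rcases Nat.eq_zero_or_pos (idx x.p i) with hk0 | hkpos
    · -- k = 0 : wrap-around case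
      have hib : bpt x.p i = i := by
        have := idx_spec x.p i
        rw [hk0, pow_zero] at this
        simpa using this
      have hidxinv : idx x.p (x.p⁻¹ i) = per x.p (bpt x.p i) - 1 := by
        refine (idx_unique ?_ ?_).symm
        · rw [hbinv]; omega
        · rw [hbinv]
          apply x.p.injective
          rw [(show ∀ (f : Equiv.Perm ι) (a : ι), f (f⁻¹ a) = a from fun f a => f.apply_symm_apply a)]
          have h9 : x.p ((x.p ^ (per x.p (bpt x.p i) - 1)) (bpt x.p i)) =
              (x.p ^ per x.p (bpt x.p i)) (bpt x.p i) := by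
            rw [← Equiv.Perm.mul_apply, ← pow_succ', Nat.sub_add_cancel hrpos]
          rw [h9, pow_per, hib]
      have A : u (π i) = g (F (Quotient.mk'' i)) := by
        rw [hu i, hk0]
        simp [pow_zero]
      have hπi0 : π i = (F (Quotient.mk'' i)).out := by
        rw [hπdef i, hk0, pow_zero]
        simp
      have B : u (π (x.p⁻¹ i)) =
          (y ^ (per x.p (bpt x.p i) - 1)).l
            ((y.p ^ (per x.p (bpt x.p i) - 1)) ((F (Quotient.mk'' i)).out)) *
          g (F (Quotient.mk'' i)) *
          ((x ^ (per x.p (bpt x.p i) - 1)).l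
            ((x.p ^ (per x.p (bpt x.p i) - 1)) (bpt x.p i)))⁻¹ := by
        rw [hu (x.p⁻¹ i), hidxinv, hmkinv, hbinv, hπdef (x.p⁻¹ i), hidxinv, hmkinv]
      have C1 : y.l (π i) * (y ^ (per x.p (bpt x.p i) - 1)).l
          ((y.p ^ (per x.p (bpt x.p i) - 1)) ((F (Quotient.mk'' i)).out)) =
          cyc y ((F (Quotient.mk'' i)).out) := by
        have hs := Wr_l_pow_succ y (per x.p (bpt x.p i) - 1) ((F (Quotient.mk'' i)).out)
        rw [Nat.sub_add_cancel hrpos] at hs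
        have hfix : (y.p ^ per x.p (bpt x.p i)) ((F (Quotient.mk'' i)).out) =
            (F (Quotient.mk'' i)).out := by
          rw [← hperF i, pow_per]
        rw [hfix] at hs
        rw [hπi0, ← hs]
        unfold cyc
        rw [hperF i]
      have C2 : x.l (bpt x.p i) * (x ^ (per x.p (bpt x.p i) - 1)).l
          ((x.p ^ (per x.p (bpt x.p i) - 1)) (bpt x.p i)) = cyc x (bpt x.p i) := by
        have hs := Wr_l_pow_succ x (per x.p (bpt x.p i) - 1) (bpt x.p i)
        rw [Nat.sub_add_cancel hrpos, pow_per] at hs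
        exact hs.symm
      rw [A, B]
      have hxl : x.l i = x.l (bpt x.p i) := by rw [hib]
      rw [hxl]
      rw [← C2, ← C1] at hgg
      have h6 : y.l (π i) * ((y ^ (per x.p (bpt x.p i) - 1)).l
            ((y.p ^ (per x.p (bpt x.p i) - 1)) ((F (Quotient.mk'' i)).out)) *
          g (F (Quotient.mk'' i)) *
          ((x ^ (per x.p (bpt x.p i) - 1)).l
            ((x.p ^ (per x.p (bpt x.p i) - 1)) (bpt x.p i)))⁻¹) =
          ((y.l (π i) * (y ^ (per x.p (bpt x.p i) - 1)).l
            ((y.p ^ (per x.p (bpt x.p i) - 1)) ((F (Quotient.mk'' i)).out))) *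
           g (F (Quotient.mk'' i))) *
          ((x ^ (per x.p (bpt x.p i) - 1)).l
            ((x.p ^ (per x.p (bpt x.p i) - 1)) (bpt x.p i)))⁻¹ := by
        group
      rw [h6, ← hgg]
      group
    · -- k = k' + 1
      obtain ⟨k', hk'⟩ : ∃ k', idx x.p i = k' + 1 := ⟨idx x.p i - 1, by omega⟩
      have hinvspec : (x.p ^ k') (bpt x.p (x.p⁻¹ i)) = x.p⁻¹ i := by
        rw [hbinv]
        apply x.p.injective
        rw [(show ∀ (f : Equiv.Perm ι) (a : ι), f (f⁻¹ a) = a from fun f a => f.apply_symm_apply a), ← Equiv.Perm.mul_apply, ← pow_succ', ← hk']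
        exact idx_spec x.p i
      have hidxinv : idx x.p (x.p⁻¹ i) = k' := by
        refine (idx_unique ?_ hinvspec).symm
        rw [hbinv]
        omega
      have A := hu i
      have B : u (π (x.p⁻¹ i)) =
          (y ^ k').l ((y.p ^ k') ((F (Quotient.mk'' i)).out)) *
          g (F (Quotient.mk'' i)) *
          ((x ^ k').l ((x.p ^ k') (bpt x.p i)))⁻¹ := by
        rw [hu (x.p⁻¹ i), hidxinv, hmkinv, hbinv, hπdef (x.p⁻¹ i), hidxinv, hmkinv]
      have Ysucc : (y ^ idx x.p i).l ((y.p ^ idx x.p i) ((F (Quotient.mk'' i)).out)) =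
          y.l ((y.p ^ idx x.p i) ((F (Quotient.mk'' i)).out)) *
            (y ^ k').l ((y.p ^ k') ((F (Quotient.mk'' i)).out)) := by
        rw [hk']
        exact Wr_l_pow_succ y k' _
      have Xsucc : (x ^ idx x.p i).l ((x.p ^ idx x.p i) (bpt x.p i)) =
          x.l ((x.p ^ idx x.p i) (bpt x.p i)) *
            (x ^ k').l ((x.p ^ k') (bpt x.p i)) := by
        rw [hk']
        exact Wr_l_pow_succ x k' _
      have hxb : (x.p ^ idx x.p i) (bpt x.p i) = i := idx_spec x.p i
      have hπik : π i = (y.p ^ idx x.p i) ((F (Quotient.mk'' i)).out) := hπdef i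
      rw [A, B, Ysucc, Xsucc, hπik, hxb]
      group
  have main : Wr.mk u e * x = y * Wr.mk u e := by
    have hpcomp : (Wr.mk u e * x).p = (y * Wr.mk u e).p := by
      rw [Wr.p_mul, Wr.p_mul, Wr.p_mk]
      ext j
      rw [Equiv.Perm.mul_apply, Equiv.Perm.mul_apply]
      exact H1 j
    have hlcomp : (Wr.mk u e * x).l = (y * Wr.mk u e).l := by
      rw [Wr.l_mul, Wr.l_mul, Wr.l_mk, Wr.p_mk]
      funext j
      simp only [Pi.mul_apply]
      obtain ⟨i, rfl⟩ := e.surjective j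
      rw [Equiv.symm_apply_apply]
      have h8 : (y.p).symm (e i) = π (x.p⁻¹ i) := by
        apply y.p.injective
        rw [Equiv.apply_symm_apply]
        have h9 := H1 (x.p⁻¹ i)
        rw [(show ∀ (f : Equiv.Perm ι) (a : ι), f (f⁻¹ a) = a from fun f a => f.apply_symm_apply a)] at h9
        exact h9
      rw [h8]
      exact mainEq i
    exact SemidirectProduct.ext hlcomp hpcomp
  exact isConj_iff.mpr ⟨Wr.mk u e, by rw [main, mul_assoc, mul_inv_cancel, mul_one]⟩

end WrC
end Converse
section Counting

open Equiv Function MulAction Subgroup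
namespace WrC

variable {G : Type} [Group G] {ι : Type} [Finite ι]

lemma pow_inj_of_lt_per {σ : Equiv.Perm ι} {i : ι} {a b : ℕ} (ha : a < per σ i)
    (hb : b < per σ i) (h : (σ ^ a) i = (σ ^ b) i) : a = b := by
  have key : ∀ {a b : ℕ}, a ≤ b → b < per σ i → (σ ^ a) i = (σ ^ b) i → a = b := by
    intro a b hab hb h
    have hfix : (σ ^ (b - a)) i = i := by
      apply (σ ^ a).injective
      rw [← Equiv.Perm.mul_apply, ← pow_add, Nat.add_sub_cancel' hab, ← h]
    have hdvd := (per_dvd_iff _ _ _).mp hfix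
    have : b - a = 0 := by
      by_contra hne
      exact absurd (Nat.le_of_dvd (Nat.pos_of_ne_zero hne) hdvd)
        (not_le.mpr (lt_of_le_of_lt (Nat.sub_le _ _) hb))
    omega
  rcases le_total a b with hab | hab
  · exact key hab hb h
  · exact (key hab ha h.symm).symm

lemma per_le_card (σ : Equiv.Perm ι) (i : ι) : per σ i ≤ Nat.card ι := by
  have hinj : Function.Injective (fun k : Fin (per σ i) => (σ ^ (k : ℕ)) i) := by
    intro a b hab
    exact Fin.ext (pow_inj_of_lt_per a.2 b.2 hab)
  have := Nat.card_le_card_of_injective _ hinj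
  simpa using this

lemma card_orbit (σ : Equiv.Perm ι) (i : ι) :
    Nat.card (MulAction.orbit (Subgroup.zpowers σ) i) = per σ i := by
  have h := Nat.card_congr (MulAction.orbitZPowersEquiv σ i)
  rw [h, Nat.card_zmod]
  show Function.minimalPeriod (fun j => σ • j) i = per σ i
  simp only [Equiv.Perm.smul_def]
  rfl

lemma wtype_support {x : Wr G ι} {pr : ℕ × ConjClasses G} (h : wtype x pr ≠ 0) :
    1 ≤ pr.1 ∧ pr.1 ≤ Nat.card ι := by
  have hne : Nonempty {O : MulAction.orbitRel.Quotient (Subgroup.zpowers x.p) ι //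
      Dm x O = pr} := by
    by_contra hne
    rw [not_nonempty_iff] at hne
    exact h (Nat.card_of_isEmpty)
  obtain ⟨O, hO⟩ := hne
  rw [← hO]
  exact ⟨per_pos _ _, per_le_card _ _⟩

lemma sum_wtype [Fintype (ConjClasses G)] [DecidableEq (ConjClasses G)] (x : Wr G ι) :
    ∑ pr ∈ (Finset.Icc 1 (Nat.card ι)) ×ˢ (Finset.univ : Finset (ConjClasses G)),
      pr.1 * wtype x pr = Nat.card ι := by
  classical
  letI : Fintype (MulAction.orbitRel.Quotient (Subgroup.zpowers x.p) ι) := Fintype.ofFinite _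
  have hw : ∀ pr, wtype x pr =
      (Finset.univ.filter (fun O : MulAction.orbitRel.Quotient (Subgroup.zpowers x.p) ι =>
        Dm x O = pr)).card := by
    intro pr
    rw [wtype, Nat.card_eq_fintype_card]
    exact Fintype.card_subtype _
  have hmaps : ∀ O ∈ (Finset.univ :
      Finset (MulAction.orbitRel.Quotient (Subgroup.zpowers x.p) ι)),
      Dm x O ∈ (Finset.Icc 1 (Nat.card ι)) ×ˢ (Finset.univ : Finset (ConjClasses G)) := by
    intro O _
    rw [Finset.mem_product, Finset.mem_Icc]
    exact ⟨⟨per_pos _ _, per_le_card _ _⟩, Finset.mem_univ _⟩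
  have step1 : ∑ pr ∈ (Finset.Icc 1 (Nat.card ι)) ×ˢ (Finset.univ : Finset (ConjClasses G)),
      pr.1 * wtype x pr =
      ∑ pr ∈ (Finset.Icc 1 (Nat.card ι)) ×ˢ (Finset.univ : Finset (ConjClasses G)),
        ∑ O ∈ Finset.univ.filter
          (fun O : MulAction.orbitRel.Quotient (Subgroup.zpowers x.p) ι => Dm x O = pr),
          (Dm x O).1 := by
    apply Finset.sum_congr rfl
    intro pr _
    rw [hw]
    rw [Finset.sum_congr rfl (fun O hO => by rw [(Finset.mem_filter.mp hO).2])]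
    rw [Finset.sum_const, smul_eq_mul, mul_comm]
  rw [step1, Finset.sum_fiberwise_of_maps_to hmaps]
  have h1 : Nat.card ι = ∑ O : MulAction.orbitRel.Quotient (Subgroup.zpowers x.p) ι,
      Nat.card (MulAction.orbit (Subgroup.zpowers x.p) (Quotient.out O)) := by
    rw [Nat.card_congr (MulAction.selfEquivSigmaOrbits (Subgroup.zpowers x.p) ι)]
    letI : ∀ O : MulAction.orbitRel.Quotient (Subgroup.zpowers x.p) ι,
        Fintype (MulAction.orbit (Subgroup.zpowers x.p) (Quotient.out O)) :=
      fun _ => Fintype.ofFinite _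
    rw [Nat.card_eq_fintype_card, Fintype.card_sigma]
    exact Finset.sum_congr rfl fun O _ => by rw [Nat.card_eq_fintype_card]
  rw [h1]
  exact Finset.sum_congr rfl fun O _ => by rw [card_orbit]; rfl

end WrC
end Counting
section Realization

open Equiv Function MulAction Subgroup
namespace WrC
open Fin.NatCast

lemma finRotate_pow_apply (m k : ℕ) (z : Fin (m + 1)) :
    ((finRotate (m + 1)) ^ k) z = z + (k : Fin (m + 1)) := by
  induction k with
  | zero => simp
  | succ k ih =>
    rw [pow_succ', Equiv.Perm.mul_apply, ih, finRotate_succ_apply]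
    push_cast
    rw [add_assoc]

lemma finRotate_pow_zero_val {r : ℕ} (hr : 0 < r) (z : Fin r) :
    ((finRotate r) ^ (z : ℕ)) ⟨0, hr⟩ = z := by
  obtain ⟨m, rfl⟩ : ∃ m, r = m + 1 := ⟨r - 1, by omega⟩
  rw [finRotate_pow_apply]
  show (0 : Fin (m + 1)) + _ = z
  rw [zero_add, Fin.cast_val_eq_self]

lemma finRotate_pow_sub {r : ℕ} (hr : 0 < r) (za zb : Fin r) :
    ((finRotate r) ^ ((za - zb : Fin r) : ℕ)) zb = za := by
  obtain ⟨m, rfl⟩ : ∃ m, r = m + 1 := ⟨r - 1, by omega⟩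
  rw [finRotate_pow_apply, Fin.cast_val_eq_self]
  abel

lemma finRotate_pow_fix {r : ℕ} (hr : 0 < r) (k : ℕ) (z : Fin r) :
    ((finRotate r) ^ k) z = z ↔ r ∣ k := by
  obtain ⟨m, rfl⟩ : ∃ m, r = m + 1 := ⟨r - 1, by omega⟩
  rw [finRotate_pow_apply]
  constructor
  · intro h
    rw [add_eq_left] at h
    exact (Fin.natCast_eq_zero).mp h
  · intro h
    rw [(Fin.natCast_eq_zero).mpr h, add_zero]

variable {G : Type} [Group G]

theorem wtype_surjective {ι : Type} [Finite ι] [Fintype (ConjClasses G)]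
    [DecidableEq (ConjClasses G)]
    (f : ℕ × ConjClasses G → ℕ)
    (hsupp : ∀ pr, f pr ≠ 0 → 1 ≤ pr.1 ∧ pr.1 ≤ Nat.card ι)
    (hsum : ∑ pr ∈ (Finset.Icc 1 (Nat.card ι)) ×ˢ (Finset.univ : Finset (ConjClasses G)),
      pr.1 * f pr = Nat.card ι) :
    ∃ x : Wr G ι, wtype x = f := by
  classical
  set s := (Finset.Icc 1 (Nat.card ι)) ×ˢ (Finset.univ : Finset (ConjClasses G)) with hs
  let S := Σ p : {p : ℕ × ConjClasses G // p ∈ s}, (Fin (f p.1) × Fin p.1.1)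
  have hpos : ∀ p : {p : ℕ × ConjClasses G // p ∈ s}, 0 < p.1.1 := by
    intro p
    have := (Finset.mem_product.mp p.2).1
    rw [Finset.mem_Icc] at this
    omega
  let ρ : Equiv.Perm S :=
    Equiv.sigmaCongrRight fun p => (Equiv.refl (Fin (f p.1))).prodCongr (finRotate p.1.1)
  let V : S → G := fun a => if (a.2.2 : ℕ) = 0 then Quotient.out a.1.1.2 else 1
  let x₀ : Wr G S := Wr.mk V ρ
  have hx₀p : x₀.p = ρ := rfl
  have hρ : ∀ a : S, ρ a = ⟨a.1, (a.2.1, (finRotate a.1.1.1) a.2.2)⟩ := by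
    intro a
    rcases a with ⟨p, c, z⟩
    rfl
  have hρpow_perm : ∀ k : ℕ, ρ ^ k = Equiv.sigmaCongrRight
      (fun p : {p : ℕ × ConjClasses G // p ∈ s} =>
        (Equiv.refl (Fin (f p.1))).prodCongr ((finRotate p.1.1) ^ k)) := by
    intro k
    induction k with
    | zero =>
      rw [pow_zero]
      refine Equiv.ext fun a => ?_
      rcases a with ⟨p, c, z⟩
      show (⟨p, (c, z)⟩ : S) = ⟨p, (c, ((finRotate p.1.1) ^ 0) z)⟩
      rw [pow_zero]
      rfl
    | succ k ih =>
      rw [pow_succ, ih]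
      refine Equiv.ext fun a => ?_
      rcases a with ⟨p, c, z⟩
      show (⟨p, (c, (finRotate p.1.1 ^ k) ((finRotate p.1.1) z))⟩ : S) =
        ⟨p, (c, (finRotate p.1.1 ^ (k + 1)) z)⟩
      exact congrArg (fun w => (⟨p, (c, w)⟩ : S))
        (by rw [pow_succ, Equiv.Perm.mul_apply])
  have hρpow : ∀ (k : ℕ) (a : S),
      (ρ ^ k) a = ⟨a.1, (a.2.1, ((finRotate a.1.1.1) ^ k) a.2.2)⟩ := by
    intro k a
    rw [hρpow_perm k]
    rcases a with ⟨p, c, z⟩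
    rfl
  have hper : ∀ a : S, per ρ a = a.1.1.1 := by
    intro a
    apply Nat.dvd_antisymm
    · rw [← per_dvd_iff, hρpow]
      rcases a with ⟨p, c, z⟩
      show (⟨p, (c, ((finRotate p.1.1) ^ p.1.1) z)⟩ : S) = ⟨p, (c, z)⟩
      rw [(finRotate_pow_fix (hpos p) _ z).mpr dvd_rfl]
    · have hfix := pow_per ρ a
      rw [hρpow] at hfix
      rcases a with ⟨p, c, z⟩
      have h2 := (Sigma.mk.inj_iff.mp hfix).2
      rw [heq_iff_eq, Prod.mk.injEq] at h2
      exact (finRotate_pow_fix (hpos p) _ z).mp h2.2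
  -- cycle product class
  have hccls : ∀ a : S, ccls x₀ a = a.1.1.2 := by
    have hbase : ∀ (p : {p : ℕ × ConjClasses G // p ∈ s}) (c : Fin (f p.1)),
        ccls x₀ (⟨p, (c, ⟨0, hpos p⟩)⟩ : S) = p.1.2 := by
      intro p c
      have hsmall : ∀ k, k < p.1.1 →
          (x₀ ^ k).l ((x₀.p ^ k) (⟨p, (c, ⟨0, hpos p⟩)⟩ : S)) = 1 := by
        intro k
        induction k with
        | zero => intro _; rw [pow_zero, pow_zero]; rfl
        | succ k ih =>
          intro hk
          rw [Wr_l_pow_succ, ih (by omega), mul_one]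
          show V ((ρ ^ (k+1)) (⟨p, (c, ⟨0, hpos p⟩)⟩ : S)) = 1
          rw [hρpow]
          show (if ((((finRotate p.1.1) ^ (k+1)) ⟨0, hpos p⟩ : Fin p.1.1) : ℕ) = 0
            then Quotient.out p.1.2 else 1) = 1
          rw [if_neg]
          intro hzero
          have : ((finRotate p.1.1) ^ (k+1)) ⟨0, hpos p⟩ = ⟨0, hpos p⟩ := by
            apply Fin.ext
            exact hzero
          rw [finRotate_pow_fix (hpos p)] at this
          have := Nat.le_of_dvd (by omega) this
          omega
      have hcyc : cyc x₀ (⟨p, (c, ⟨0, hpos p⟩)⟩ : S) = Quotient.out p.1.2 := by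
        unfold cyc
        rw [hx₀p, hper]
        show (x₀ ^ p.1.1).l (⟨p, (c, ⟨0, hpos p⟩)⟩ : S) = _
        have hfix : (x₀.p ^ p.1.1) (⟨p, (c, ⟨0, hpos p⟩)⟩ : S) =
            (⟨p, (c, ⟨0, hpos p⟩)⟩ : S) := by
          rw [hx₀p, hρpow]
          show (⟨p, (c, ((finRotate p.1.1) ^ p.1.1) ⟨0, hpos p⟩)⟩ : S) = _
          rw [(finRotate_pow_fix (hpos p) _ _).mpr dvd_rfl]
        conv_lhs => rw [← hfix]
        have hsucc := Wr_l_pow_succ x₀ (p.1.1 - 1) (⟨p, (c, ⟨0, hpos p⟩)⟩ : S)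
        rw [Nat.sub_add_cancel (hpos p)] at hsucc
        rw [hsucc, hsmall (p.1.1 - 1) (by have := hpos p; omega), mul_one, hfix]
        rfl
      unfold ccls
      rw [hcyc]
      exact Quotient.out_eq _
    intro a
    rcases a with ⟨p, c, z⟩
    have hmem : (⟨p, (c, z)⟩ : S) ∈
        MulAction.orbit (Subgroup.zpowers x₀.p) (⟨p, (c, ⟨0, hpos p⟩)⟩ : S) := by
      apply mem_orbit_iff_pow.mpr
      refine ⟨(z : ℕ), ?_⟩
      rw [hx₀p, hρpow]
      show (⟨p, (c, ((finRotate p.1.1) ^ (z : ℕ)) ⟨0, hpos p⟩)⟩ : S) = _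
      congr 1
      rw [Prod.mk.injEq]
      exact ⟨rfl, finRotate_pow_zero_val (hpos p) z⟩
    rw [ccls_of_mem_orbit hmem, hbase]
  -- Dm computation
  have hDm : ∀ O : MulAction.orbitRel.Quotient (Subgroup.zpowers x₀.p) S,
      Dm x₀ O = ((Quotient.out O : S).1.1.1, (Quotient.out O : S).1.1.2) := by
    intro O
    unfold Dm
    rw [hccls]
    exact Prod.ext (hper _) rfl
  -- orbit space of the model
  let q : S → Σ p : {p : ℕ × ConjClasses G // p ∈ s}, Fin (f p.1) := fun a => ⟨a.1, a.2.1⟩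
  have hq : ∀ a b : S, (MulAction.orbitRel (Subgroup.zpowers x₀.p) S) a b ↔ q a = q b := by
    intro a b
    rw [MulAction.orbitRel_apply, mem_orbit_iff_pow]
    constructor
    · rintro ⟨k, rfl⟩
      rw [hx₀p, hρpow]
    · intro h
      rcases a with ⟨pa, ca, za⟩
      rcases b with ⟨pb, cb, zb⟩
      obtain ⟨h1, h2⟩ := Sigma.mk.inj_iff.mp h
      cases h1
      rw [heq_iff_eq] at h2
      cases h2
      refine ⟨((za - zb : Fin pa.1.1) : ℕ), ?_⟩
      rw [hx₀p, hρpow]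
      show (⟨pa, (ca, ((finRotate pa.1.1) ^ (((za - zb : Fin pa.1.1)) : ℕ)) zb)⟩ : S) = _
      congr 1
      rw [Prod.mk.injEq]
      exact ⟨rfl, finRotate_pow_sub (hpos pa) za zb⟩
  let E : MulAction.orbitRel.Quotient (Subgroup.zpowers x₀.p) S ≃
      Σ p : {p : ℕ × ConjClasses G // p ∈ s}, Fin (f p.1) := by
    refine Equiv.ofBijective (Quotient.lift q (fun a b h => (hq a b).mp h)) ⟨?_, ?_⟩
    · intro O O'
      induction O using Quotient.inductionOn' with
      | h a =>
        induction O' using Quotient.inductionOn' with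
        | h b =>
          intro h
          exact Quotient.sound' ((hq a b).mpr h)
    · rintro ⟨p, c⟩
      exact ⟨Quotient.mk'' (⟨p, (c, ⟨0, hpos p⟩)⟩ : S), rfl⟩
  have hE : ∀ O, E O = q (Quotient.out O) := by
    intro O
    conv_lhs => rw [← Quotient.out_eq' O]
    rfl
  -- cardinality of the model
  have hcardS : Nat.card S = Nat.card ι := by
    rw [Nat.card_eq_fintype_card, Fintype.card_sigma]
    have h1 : ∀ p : {p : ℕ × ConjClasses G // p ∈ s},
        Fintype.card (Fin (f p.1) × Fin p.1.1) = f p.1 * p.1.1 := by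
      intro p
      rw [Fintype.card_prod, Fintype.card_fin, Fintype.card_fin]
    calc (∑ p : {p : ℕ × ConjClasses G // p ∈ s}, Fintype.card (Fin (f p.1) × Fin p.1.1))
        = ∑ p : {p : ℕ × ConjClasses G // p ∈ s}, f p.1 * p.1.1 :=
          Finset.sum_congr rfl (fun p _ => h1 p)
      _ = ∑ p ∈ s, f p * p.1 := Finset.sum_coe_sort s (fun pr => f pr * pr.1)
      _ = ∑ p ∈ s, p.1 * f p := Finset.sum_congr rfl (fun p _ => mul_comm _ _)
      _ = Nat.card ι := hsum
  obtain e2 : Nonempty (S ≃ ι) := Finite.card_eq.mp hcardS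
  obtain ⟨e2⟩ := e2
  refine ⟨transport e2 x₀, ?_⟩
  rw [wtype_transport]
  funext pr
  by_cases hpr : pr ∈ s
  · have hEq1 : {O : MulAction.orbitRel.Quotient (Subgroup.zpowers x₀.p) S //
        Dm x₀ O = pr} ≃
        {b : Σ p : {p : ℕ × ConjClasses G // p ∈ s}, Fin (f p.1) // b.1.1 = pr} :=
      Equiv.subtypeEquiv E (fun O => by rw [hDm, hE])
    have hEq2 : {b : Σ p : {p : ℕ × ConjClasses G // p ∈ s}, Fin (f p.1) // b.1.1 = pr} ≃
        Fin (f pr) := by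
      refine ⟨fun b => Fin.cast (congrArg (fun t => f t) b.2) b.1.2,
        fun c => ⟨⟨⟨pr, hpr⟩, c⟩, rfl⟩, ?_, fun c => rfl⟩
      rintro ⟨⟨⟨p', hp'⟩, c⟩, h⟩
      have h' : p' = pr := h
      subst h'
      rfl
    show Nat.card _ = f pr
    rw [Nat.card_congr (hEq1.trans hEq2)]
    simp [Nat.card_eq_fintype_card]
  · have hf0 : f pr = 0 := by
      by_contra hne
      obtain ⟨h1, h2⟩ := hsupp pr hne
      exact hpr (Finset.mem_product.mpr ⟨Finset.mem_Icc.mpr ⟨h1, h2⟩, Finset.mem_univ _⟩)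
    have : IsEmpty {O : MulAction.orbitRel.Quotient (Subgroup.zpowers x₀.p) S //
        Dm x₀ O = pr} := by
      constructor
      rintro ⟨O, hO⟩
      apply hpr
      rw [← hO, hDm]
      have := (Quotient.out O : S).1.2
      simpa using this
    show Nat.card _ = f pr
    rw [Nat.card_of_isEmpty, hf0]

end WrC
end Realization
section ClassCount

open Equiv Function MulAction Subgroup
namespace WrC

variable {G : Type} [Group G]

theorem card_conjClasses_wreath {ι : Type} [Finite ι] [Fintype (ConjClasses G)]
    [DecidableEq (ConjClasses G)] :
    Nat.card (ConjClasses (Wr G ι)) =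
      Nat.card {l : (ℕ × ConjClasses G) →₀ ℕ //
        l ∈ ((Finset.Icc 1 (Nat.card ι)) ×ˢ (Finset.univ : Finset (ConjClasses G))).finsuppAntidiag
          (Nat.card ι) ∧
        ∀ pr ∈ (Finset.Icc 1 (Nat.card ι)) ×ˢ (Finset.univ : Finset (ConjClasses G)),
          pr.1 ∣ l pr} := by
  classical
  set s := (Finset.Icc 1 (Nat.card ι)) ×ˢ (Finset.univ : Finset (ConjClasses G)) with hs
  have hmem_iff : ∀ pr : ℕ × ConjClasses G, pr ∈ s ↔ 1 ≤ pr.1 ∧ pr.1 ≤ Nat.card ι := by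
    intro pr
    rw [hs, Finset.mem_product, Finset.mem_Icc]
    simp
  have hlift : ∀ (a b : Wr G ι), IsConj a b → wtype a = wtype b := by
    intro a b hab
    obtain ⟨c, hc⟩ := hab
    exact (wtype_semiconj hc).symm
  have e1 : ConjClasses (Wr G ι) ≃ {f : ℕ × ConjClasses G → ℕ //
      (∀ pr, f pr ≠ 0 → 1 ≤ pr.1 ∧ pr.1 ≤ Nat.card ι) ∧
      ∑ pr ∈ s, pr.1 * f pr = Nat.card ι} := by
    refine Equiv.ofBijective (Quotient.lift (fun x : Wr G ι =>
      (⟨wtype x, fun pr h => wtype_support h, sum_wtype x⟩ :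
        {f : ℕ × ConjClasses G → ℕ //
          (∀ pr, f pr ≠ 0 → 1 ≤ pr.1 ∧ pr.1 ≤ Nat.card ι) ∧
          ∑ pr ∈ s, pr.1 * f pr = Nat.card ι}))
      (fun a b hab => Subtype.ext (hlift a b hab))) ⟨?_, ?_⟩
    · intro c1 c2
      induction c1 using Quotient.inductionOn' with
      | h a =>
        induction c2 using Quotient.inductionOn' with
        | h b =>
          intro h
          have hww : wtype a = wtype b := congrArg Subtype.val h
          exact Quotient.sound' (isConj_of_wtype_eq hww)
    · rintro ⟨f, hf1, hf2⟩
      obtain ⟨x, hx⟩ := wtype_surjective f hf1 hf2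
      exact ⟨Quotient.mk'' x, Subtype.ext hx⟩
  have e2 : {f : ℕ × ConjClasses G → ℕ //
      (∀ pr, f pr ≠ 0 → 1 ≤ pr.1 ∧ pr.1 ≤ Nat.card ι) ∧
      ∑ pr ∈ s, pr.1 * f pr = Nat.card ι} ≃
      {l : (ℕ × ConjClasses G) →₀ ℕ //
        l ∈ s.finsuppAntidiag (Nat.card ι) ∧ ∀ pr ∈ s, pr.1 ∣ l pr} := by
    have hsupp : ∀ (f : {f : ℕ × ConjClasses G → ℕ //
        (∀ pr, f pr ≠ 0 → 1 ≤ pr.1 ∧ pr.1 ≤ Nat.card ι) ∧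
        ∑ pr ∈ s, pr.1 * f pr = Nat.card ι}) (pr : ℕ × ConjClasses G),
        pr.1 * f.1 pr ≠ 0 → pr ∈ s := by
      intro f pr h
      refine (hmem_iff pr).mpr (f.2.1 pr ?_)
      intro h0
      exact h (by rw [h0, mul_zero])
    refine ⟨fun f => ⟨Finsupp.onFinset s (fun pr => pr.1 * f.1 pr) (hsupp f), ?_, ?_⟩,
      fun l => ⟨fun pr => if pr ∈ s then l.1 pr / pr.1 else 0, ?_, ?_⟩, ?_, ?_⟩
    · rw [Finset.mem_finsuppAntidiag]
      constructor
      · have hss : s.sum ⇑(Finsupp.onFinset s (fun pr => pr.1 * f.1 pr) (hsupp f)) =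
            ∑ pr ∈ s, pr.1 * f.1 pr := Finset.sum_congr rfl (fun pr _ => rfl)
        rw [hss]
        exact f.2.2
      · exact Finsupp.support_onFinset_subset
    · intro pr _
      exact dvd_mul_right _ _
    · intro pr h
      dsimp only at h
      by_cases hpr : pr ∈ s
      · exact (hmem_iff pr).mp hpr
      · rw [if_neg hpr] at h
        exact absurd rfl h
    · have hl := (Finset.mem_finsuppAntidiag.mp l.2.1).1
      have hss : ∑ pr ∈ s, pr.1 * (fun pr => if pr ∈ s then l.1 pr / pr.1 else 0) pr =
          ∑ pr ∈ s, l.1 pr := by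
        apply Finset.sum_congr rfl
        intro pr hpr
        dsimp only
        rw [if_pos hpr, Nat.mul_div_cancel' (l.2.2 pr hpr)]
      rw [hss]
      exact hl
    · intro f
      apply Subtype.ext
      funext pr
      show (if pr ∈ s then (pr.1 * f.1 pr) / pr.1 else 0) = f.1 pr
      by_cases hpr : pr ∈ s
      · rw [if_pos hpr]
        have hpos : 0 < pr.1 := ((hmem_iff pr).mp hpr).1
        exact Nat.mul_div_cancel_left _ hpos
      · rw [if_neg hpr]
        by_contra hne
        exact hpr ((hmem_iff pr).mpr (f.2.1 pr fun h0 => hne h0.symm))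
    · intro l
      apply Subtype.ext
      apply Finsupp.ext
      intro pr
      show pr.1 * (if pr ∈ s then l.1 pr / pr.1 else 0) = l.1 pr
      by_cases hpr : pr ∈ s
      · rw [if_pos hpr, Nat.mul_div_cancel' (l.2.2 pr hpr)]
      · rw [if_neg hpr, mul_zero]
        symm
        rw [← Finsupp.notMem_support_iff]
        intro hmem
        exact hpr ((Finset.mem_finsuppAntidiag.mp l.2.1).2 hmem)
  rw [Nat.card_congr (e1.trans e2)]

end WrC
end ClassCount
section Final

open WrC

lemma chi_one_eq_card_conjClasses (H : Type*) [Group H] [Finite H]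
    (X : Type*) [MulAction H X] [Unique X] :
    chi 1 H X = (Nat.card (ConjClasses H) : ℚ) := by
  have h1 : chi 1 H X = chiT 1 H X := rfl
  rw [h1]
  unfold chiT
  have e : {p : (Fin 2 → H) × X // (∀ i j, Commute (p.1 i) (p.1 j)) ∧ ∀ i, p.1 i • p.2 = p.2}
      ≃ {q : H × H // Commute q.1 q.2} := by
    refine ⟨fun p => ⟨(p.1.1 0, p.1.1 1), p.2.1 0 1⟩,
      fun q => ⟨(![q.1.1, q.1.2], default), ?_, fun i => Subsingleton.elim _ _⟩, ?_, ?_⟩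
    · intro i j
      fin_cases i <;> fin_cases j <;>
        simp only [Matrix.cons_val_zero, Matrix.cons_val_one, Matrix.head_cons]
      exacts [Commute.refl _, q.2, q.2.symm, Commute.refl _]
    · rintro ⟨⟨v, x⟩, hp⟩
      apply Subtype.ext
      refine Prod.ext ?_ (Subsingleton.elim _ _)
      funext i
      fin_cases i <;> simp
    · rintro ⟨⟨a, b⟩, h⟩
      apply Subtype.ext
      simp
  rw [Nat.card_congr e, card_comm_eq_card_conjClasses_mul_card]
  have hH : (Nat.card H : ℚ) ≠ 0 := by
    have : 0 < Nat.card H := Nat.card_pos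
    exact_mod_cast this.ne'
  push_cast
  rw [mul_div_assoc, div_self hH, mul_one]

open PowerSeries in
lemma coeff_B_eq {B : ℕ → PowerSeries ℤ}
    (hB : ∀ r, 1 ≤ r → B r * (1 - (PowerSeries.X : PowerSeries ℤ) ^ r) = 1)
    {r : ℕ} (hr : 1 ≤ r) (k : ℕ) :
    PowerSeries.coeff k (B r) = if r ∣ k then 1 else 0 := by
  induction k using Nat.strong_induction_on with
  | _ k ih =>
    have h1 := congrArg (PowerSeries.coeff k) (hB r hr)
    rw [mul_sub, mul_one, map_sub, PowerSeries.coeff_one,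
      PowerSeries.coeff_mul_X_pow'] at h1
    by_cases hk0 : k = 0
    · subst hk0
      rw [if_neg (by omega), sub_zero, if_pos rfl] at h1
      rw [if_pos (dvd_zero r)]
      exact h1
    · rw [if_neg hk0] at h1
      by_cases hrk : r ≤ k
      · rw [if_pos hrk] at h1
        have h2 : PowerSeries.coeff k (B r) = PowerSeries.coeff (k - r) (B r) :=
          sub_eq_zero.mp h1
        rw [h2, ih (k - r) (by omega)]
        by_cases hd : r ∣ k
        · rw [if_pos (Nat.dvd_sub hd dvd_rfl), if_pos hd]
        · rw [if_neg ?_, if_neg hd]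
          intro hdd
          apply hd
          have := Nat.dvd_add hdd (dvd_rfl (a := r))
          rwa [Nat.sub_add_cancel hrk] at this
      · rw [if_neg hrk, sub_zero] at h1
        rw [h1, if_neg]
        intro hd
        have := Nat.le_of_dvd (by omega) hd
        omega

end Final
set_option maxHeartbeats 1000000 in
open PowerSeries in
/-- Macdonald type formula for the numbers of conjugacy classes (= first order Euler
characteristics of the one-point set) of the wreath products `G_n`:
`1 + Σ χ⁽¹⁾(ptⁿ, G_n) tⁿ = Π_{r ≥ 1} (1 - t^r)^{-c(G)}`, stated coefficientwise, where
`B r` is the inverse power series of `1 - t^r` (only factors with `r ≤ n` contribute to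
the `n`-th coefficient). -/
theorem macdonald_formula_wreath_conj_classes
    (G : Type) [Group G] [Finite G]
    (B : ℕ → PowerSeries ℤ) (hB : ∀ r, 1 ≤ r → B r * (1 - (PowerSeries.X : PowerSeries ℤ) ^ r) = 1) :
    ∀ n : ℕ,
      ((PowerSeries.coeff (R := ℤ) n
          (∏ r ∈ Finset.Icc 1 n, (B r) ^ (Nat.card (ConjClasses G))) : ℤ) : ℚ)
        = chi 1 (Wr G (Fin n)) (Fin n → PUnit) := by
  intro n
  classical
  letI : Fintype (ConjClasses G) := Fintype.ofFinite _
  haveI : Finite (Wr G (Fin n)) := by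
    apply Finite.of_injective
      (fun w : Wr G (Fin n) => (SemidirectProduct.left w, SemidirectProduct.right w))
    intro a b h
    exact SemidirectProduct.ext (congrArg Prod.fst h) (congrArg Prod.snd h)
  rw [chi_one_eq_card_conjClasses]
  rw [WrC.card_conjClasses_wreath (G := G) (ι := Fin n)]
  have hN : Nat.card (Fin n) = n := by simp [Nat.card_eq_fintype_card]
  rw [hN]
  set s := (Finset.Icc 1 n) ×ˢ (Finset.univ : Finset (ConjClasses G)) with hs
  -- rewrite the product
  have step1 : (∏ r ∈ Finset.Icc 1 n, (B r) ^ (Nat.card (ConjClasses G))) =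
      ∏ pr ∈ s, B pr.1 := by
    rw [hs, Finset.prod_product]
    apply Finset.prod_congr rfl
    intro r _
    dsimp only
    rw [Finset.prod_const, Finset.card_univ, Nat.card_eq_fintype_card]
  rw [step1, PowerSeries.coeff_prod]
  have step2 : ∀ l ∈ s.finsuppAntidiag n,
      (∏ pr ∈ s, PowerSeries.coeff (l pr) (B pr.1)) =
        if (∀ pr ∈ s, pr.1 ∣ l pr) then 1 else 0 := by
    intro l _
    rw [Finset.prod_congr rfl (fun pr hpr => coeff_B_eq hB
      (Finset.mem_Icc.mp (Finset.mem_product.mp hpr).1).1 (l pr))]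
    exact Finset.prod_boole
  have step4 : (∑ l ∈ s.finsuppAntidiag n,
      ((if (∀ pr ∈ s, pr.1 ∣ l pr) then 1 else 0) : ℤ))
      = (Nat.card {l : (ℕ × ConjClasses G) →₀ ℕ //
          l ∈ s.finsuppAntidiag n ∧ ∀ pr ∈ s, pr.1 ∣ l pr} : ℤ) := by
    rw [Finset.sum_boole, ← Nat.card_eq_finsetCard]
    exact congrArg _ (Nat.card_congr (Equiv.subtypeEquivRight (fun l => Finset.mem_filter)))
  rw [Finset.sum_congr rfl step2, step4]
  push_cast
  rfl
end

section
/- A λ-ring structure λ : R → 1 + t·R[[t]] (an additive-to-multiplicative homomorphism with λ_a(t) = 1 + a·t + O(t²)) on a commutative ring R determines a finitely determined power structure over R: every series A(t) ∈ 1 + t·R[[t]] can be written uniquely as Π_{i≥1} λ_{b_i}(t^i) for some b_i ∈ R, and setting (A(t))^m := Π_{i≥1} λ_{m·b_i}(t^i) yields an operation satisfying (A(t))^{m+n} = (A(t))^m · (A(t))^n and (A(t))^0 = 1, (A(t))^1 = A(t). -/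
/-- Substitution `t ↦ tⁱ` in a formal power series. -/
noncomputable def expandPS {R : Type*} [CommRing R] (i : ℕ) (f : PowerSeries R) :
    PowerSeries R :=
  PowerSeries.mk fun n => if i ∣ n then PowerSeries.coeff (n / i) f else 0

/-!
Since `λ_a(t) ≡ 1 + a t mod t²`, the factor `λ_{bᵢ}(tⁱ)` is `1 + bᵢ tⁱ` modulo `tⁱ⁺¹`. Hence
factors with `i > N` do not affect the `t^N`-coefficient of `Π λ_{bᵢ}(tⁱ)`, and the factor with
`i = N` contributes exactly `b_N` to it. So `b ↦ Π λ_{bᵢ}(tⁱ)` is a bijection from sequences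
onto `1 + t R⟦t⟧`, inverted by solving for `b_N` one coefficient at a time. As `λ` is additive
and `t ↦ tⁱ` is a ring endomorphism, this bijection turns addition of sequences into
multiplication of series, so `A^m := Π λ_{m bᵢ}(tⁱ)` inherits the exponent laws from `R`.
-/

open PowerSeries Finset

section Expand

variable {R : Type*} [CommRing R]

theorem expandPS_eq_expand {i : ℕ} (hi : i ≠ 0) (f : R⟦X⟧) : expandPS i f = expand i hi f := by
  ext n
  rw [coeff_expand]
  simp [expandPS]

theorem expandPS_mul {i : ℕ} (hi : i ≠ 0) (f g : R⟦X⟧) :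
    expandPS i (f * g) = expandPS i f * expandPS i g := by
  simp only [expandPS_eq_expand hi, map_mul]

theorem constantCoeff_expandPS (i : ℕ) (f : R⟦X⟧) :
    constantCoeff (expandPS i f) = constantCoeff f := by
  simp only [← coeff_zero_eq_constantCoeff_apply, expandPS, coeff_mk, dvd_zero, if_true,
    Nat.zero_div]

theorem X_pow_dvd_expandPS_sub_one {f : R⟦X⟧} (hf : coeff 0 f = 1) (i : ℕ) :
    X ^ i ∣ expandPS i f - 1 := by
  refine X_pow_dvd_iff.2 fun m hm => ?_
  rcases eq_or_ne m 0 with rfl | hm0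
  · simp [expandPS, hf]
  · simp [expandPS, Nat.not_dvd_of_pos_of_lt (Nat.pos_of_ne_zero hm0) hm, coeff_one, hm0]

theorem X_pow_succ_dvd_expandPS_sub {i : ℕ} (hi : i ≠ 0) (f : R⟦X⟧) :
    X ^ (i + 1) ∣ expandPS i f - C (coeff 0 f) - C (coeff 1 f) * X ^ i := by
  refine X_pow_dvd_iff.2 fun m hm => ?_
  rcases Nat.lt_succ_iff_lt_or_eq.1 hm with hm | rfl
  · rcases eq_or_ne m 0 with rfl | hm0
    · simp [expandPS, hi]
    · simp [expandPS, Nat.not_dvd_of_pos_of_lt (Nat.pos_of_ne_zero hm0) hm, coeff_C, hm0,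
        hm.ne]
  · simp [expandPS, coeff_C, hi, Nat.div_self (Nat.pos_of_ne_zero hi)]

end Expand

section Coeff

variable {R : Type*} [CommRing R]

theorem coeff_mul_of_X_pow_succ_dvd {n : ℕ} {a : R} {h : R⟦X⟧}
    (hh : X ^ (n + 1) ∣ h - 1 - C a * X ^ n) (g : R⟦X⟧) :
    coeff n (g * h) = coeff n g + a * coeff 0 g := by
  have hg : coeff n (g * (h - 1 - C a * X ^ n)) = 0 :=
    X_pow_dvd_iff.1 (dvd_mul_of_dvd_right hh g) n n.lt_succ_self
  calc coeff n (g * h) = coeff n (g + C a * (X ^ n * g) + g * (h - 1 - C a * X ^ n)) := by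
        congr 1; ring
    _ = coeff n g + a * coeff 0 g := by
        rw [map_add, map_add, hg, coeff_C_mul, coeff_X_pow_mul', if_pos le_rfl, Nat.sub_self,
          add_zero]

theorem coeff_mul_of_X_pow_succ_dvd_sub_one {n : ℕ} {h : R⟦X⟧} (hh : X ^ (n + 1) ∣ h - 1)
    (g : R⟦X⟧) : coeff n (g * h) = coeff n g := by
  simpa using coeff_mul_of_X_pow_succ_dvd (a := 0) (by simpa using hh) g

theorem coeff_mul_congr {n : ℕ} {f f' g g' : R⟦X⟧} (hf : ∀ k ≤ n, coeff k f = coeff k f')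
    (hg : ∀ k ≤ n, coeff k g = coeff k g') : coeff n (f * g) = coeff n (f' * g') := by
  simp only [coeff_mul]
  refine sum_congr rfl fun p hp => ?_
  rw [hf _ (HasAntidiagonal.antidiagonal.fst_le hp), hg _ (HasAntidiagonal.antidiagonal.snd_le hp)]

end Coeff

section Lambda

variable {R : Type*} [CommRing R] (l : R → R⟦X⟧)

noncomputable def lambdaProd (c : ℕ → R) (N : ℕ) : R⟦X⟧ :=
  ∏ i ∈ Icc 1 N, expandPS i (l (c i))

/-- The infinite product `Π_{i ≥ 1} λ_{cᵢ}(tⁱ)`: its `t^N`-coefficient is read off from the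
first `N` factors (see `coeff_lambdaSeries`). -/
noncomputable def lambdaSeries (c : ℕ → R) : R⟦X⟧ :=
  mk fun N => coeff N (lambdaProd l c N)

/-- Solves `A = Π λ_{bᵢ}(tⁱ)` for `b` one coefficient at a time, as `coeff_lambdaSeries_succ`
forces. -/
noncomputable def lambdaExponents (l : R → R⟦X⟧) (A : R⟦X⟧) : ℕ → R
  | 0 => 0
  | N + 1 => coeff (N + 1) A -
      coeff (N + 1) (∏ i ∈ (Icc 1 N).attach, expandPS i.1 (l (lambdaExponents l A i.1)))
  decreasing_by exact Nat.lt_succ_of_le (mem_Icc.1 i.2).2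

variable {l}

theorem lambdaProd_succ (c : ℕ → R) (N : ℕ) :
    lambdaProd l c (N + 1) = lambdaProd l c N * expandPS (N + 1) (l (c (N + 1))) :=
  prod_Icc_succ_top (Nat.le_add_left 1 N) _

theorem lambdaProd_congr {c d : ℕ → R} {N : ℕ} (h : ∀ i ∈ Icc 1 N, c i = d i) :
    lambdaProd l c N = lambdaProd l d N :=
  prod_congr rfl fun i hi => by rw [h i hi]

theorem lambdaProd_add (hadd : ∀ a b, l (a + b) = l a * l b) (c d : ℕ → R) (N : ℕ) :
    lambdaProd l (c + d) N = lambdaProd l c N * lambdaProd l d N := by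
  rw [lambdaProd, lambdaProd, lambdaProd, ← prod_mul_distrib]
  refine prod_congr rfl fun i hi => ?_
  rw [Pi.add_apply, hadd, expandPS_mul (by grind)]

theorem coeff_zero_lambdaProd (hconst : ∀ a, coeff 0 (l a) = 1) (c : ℕ → R) (N : ℕ) :
    coeff 0 (lambdaProd l c N) = 1 := by
  rw [coeff_zero_eq_constantCoeff_apply, lambdaProd, map_prod]
  exact prod_eq_one fun i _ => by
    rw [constantCoeff_expandPS, ← coeff_zero_eq_constantCoeff_apply, hconst]

theorem coeff_lambdaProd_succ (hconst : ∀ a, coeff 0 (l a) = 1)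
    (hlin : ∀ a, coeff 1 (l a) = a) (c : ℕ → R) (N : ℕ) :
    coeff (N + 1) (lambdaProd l c (N + 1)) = coeff (N + 1) (lambdaProd l c N) + c (N + 1) := by
  have hfactor := X_pow_succ_dvd_expandPS_sub N.succ_ne_zero (l (c (N + 1)))
  rw [hconst, hlin, map_one] at hfactor
  rw [lambdaProd_succ, coeff_mul_of_X_pow_succ_dvd hfactor, coeff_zero_lambdaProd hconst,
    mul_one]

theorem coeff_lambdaProd_of_le (hconst : ∀ a, coeff 0 (l a) = 1) (c : ℕ → R) {N M : ℕ}
    (h : N ≤ M) : coeff N (lambdaProd l c M) = coeff N (lambdaProd l c N) := by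
  induction M, h using Nat.le_induction with
  | base => rfl
  | succ M hNM ih =>
    have hfactor : X ^ (N + 1) ∣ expandPS (M + 1) (l (c (M + 1))) - 1 :=
      (pow_dvd_pow X (by omega)).trans (X_pow_dvd_expandPS_sub_one (hconst _) _)
    rw [lambdaProd_succ, coeff_mul_of_X_pow_succ_dvd_sub_one hfactor, ih]

theorem coeff_lambdaSeries (hconst : ∀ a, coeff 0 (l a) = 1) (c : ℕ → R) {N M : ℕ}
    (h : N ≤ M) : coeff N (lambdaSeries l c) = coeff N (lambdaProd l c M) := by
  rw [lambdaSeries, coeff_mk, coeff_lambdaProd_of_le hconst c h]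

theorem coeff_zero_lambdaSeries (hconst : ∀ a, coeff 0 (l a) = 1) (c : ℕ → R) :
    coeff 0 (lambdaSeries l c) = 1 := by
  rw [lambdaSeries, coeff_mk, coeff_zero_lambdaProd hconst]

theorem coeff_lambdaSeries_succ (hconst : ∀ a, coeff 0 (l a) = 1)
    (hlin : ∀ a, coeff 1 (l a) = a) (c : ℕ → R) (N : ℕ) :
    coeff (N + 1) (lambdaSeries l c) = coeff (N + 1) (lambdaProd l c N) + c (N + 1) := by
  rw [lambdaSeries, coeff_mk, coeff_lambdaProd_succ hconst hlin]

theorem lambdaSeries_add (hconst : ∀ a, coeff 0 (l a) = 1)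
    (hadd : ∀ a b, l (a + b) = l a * l b) (c d : ℕ → R) :
    lambdaSeries l (c + d) = lambdaSeries l c * lambdaSeries l d := by
  ext N
  rw [lambdaSeries, coeff_mk, lambdaProd_add hadd]
  exact (coeff_mul_congr (fun k hk => coeff_lambdaSeries hconst c hk)
    (fun k hk => coeff_lambdaSeries hconst d hk)).symm

theorem lambdaSeries_zero (hconst : ∀ a, coeff 0 (l a) = 1)
    (hadd : ∀ a b, l (a + b) = l a * l b) : lambdaSeries l (0 : ℕ → R) = 1 := by
  have hunit : IsUnit (lambdaSeries l (0 : ℕ → R)) := by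
    rw [isUnit_iff_constantCoeff, ← coeff_zero_eq_constantCoeff_apply,
      coeff_zero_lambdaSeries hconst]
    exact isUnit_one
  refine (IsIdempotentElem.iff_eq_one_of_isUnit hunit).1 ?_
  rw [IsIdempotentElem, ← lambdaSeries_add hconst hadd, add_zero]

theorem lambdaExponents_zero (A : R⟦X⟧) : lambdaExponents l A 0 = 0 := by
  rw [lambdaExponents]

theorem lambdaExponents_succ (A : R⟦X⟧) (N : ℕ) :
    lambdaExponents l A (N + 1) =
      coeff (N + 1) A - coeff (N + 1) (lambdaProd l (lambdaExponents l A) N) := by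
  rw [lambdaExponents, lambdaProd, ← prod_attach (Icc 1 N)]

theorem lambdaSeries_lambdaExponents (hconst : ∀ a, coeff 0 (l a) = 1)
    (hlin : ∀ a, coeff 1 (l a) = a) {A : R⟦X⟧} (hA : coeff 0 A = 1) :
    lambdaSeries l (lambdaExponents l A) = A := by
  ext N
  cases N with
  | zero => rw [coeff_zero_lambdaSeries hconst, hA]
  | succ N => rw [coeff_lambdaSeries_succ hconst hlin, lambdaExponents_succ, add_sub_cancel]

theorem lambdaExponents_lambdaSeries (hconst : ∀ a, coeff 0 (l a) = 1)
    (hlin : ∀ a, coeff 1 (l a) = a) {b : ℕ → R} (hb : b 0 = 0) :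
    lambdaExponents l (lambdaSeries l b) = b := by
  funext N
  induction N using Nat.strong_induction_on with
  | _ N ih =>
    cases N with
    | zero => rw [lambdaExponents_zero, hb]
    | succ N =>
      have hprod : lambdaProd l (lambdaExponents l (lambdaSeries l b)) N = lambdaProd l b N :=
        lambdaProd_congr fun i hi => ih i (by grind)
      rw [lambdaExponents_succ, hprod, coeff_lambdaSeries_succ hconst hlin, add_sub_cancel_left]

theorem existsUnique_eq_lambdaSeries (hconst : ∀ a, coeff 0 (l a) = 1)
    (hlin : ∀ a, coeff 1 (l a) = a) {A : R⟦X⟧} (hA : coeff 0 A = 1) :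
    ∃! b : ℕ → R, b 0 = 0 ∧ A = lambdaSeries l b := by
  refine ⟨lambdaExponents l A,
    ⟨lambdaExponents_zero A, (lambdaSeries_lambdaExponents hconst hlin hA).symm⟩, ?_⟩
  rintro b ⟨hb, rfl⟩
  exact (lambdaExponents_lambdaSeries hconst hlin hb).symm

theorem eq_lambdaSeries_iff {A : R⟦X⟧} {b : ℕ → R} :
    A = lambdaSeries l b ↔ ∀ N, coeff N A = coeff N (∏ i ∈ Icc 1 N, expandPS i (l (b i))) := by
  simp only [PowerSeries.ext_iff, lambdaSeries, coeff_mk, lambdaProd]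

end Lambda

/-- A λ-ring structure on `R` determines a (finitely determined) power structure over `R`:
every series with constant term 1 factors uniquely as `Π λ_{bᵢ}(tⁱ)` (the infinite product
understood coefficientwise: the `N`-th coefficient only involves factors with `i ≤ N`),
and `(A(t))^m := Π λ_{m bᵢ}(tⁱ)` satisfies `A^{m+n} = A^m A^n`, `A^0 = 1`, `A^1 = A`. -/
theorem lambda_structure_gives_power_structure
    (R : Type) [CommRing R] (l : R → PowerSeries R)
    (hconst : ∀ a, PowerSeries.coeff 0 (l a) = 1)
    (hlin : ∀ a, PowerSeries.coeff 1 (l a) = a)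
    (hadd : ∀ a b, l (a + b) = l a * l b) :
    (∀ A : PowerSeries R, PowerSeries.coeff 0 A = 1 →
      ∃! b : ℕ → R, b 0 = 0 ∧ ∀ N, PowerSeries.coeff N A =
        PowerSeries.coeff N (∏ i ∈ Finset.Icc 1 N, expandPS i (l (b i)))) ∧
    ∃ P : PowerSeries R → R → PowerSeries R,
      (∀ A m (b : ℕ → R), b 0 = 0 →
        (∀ N, PowerSeries.coeff N A =
          PowerSeries.coeff N (∏ i ∈ Finset.Icc 1 N, expandPS i (l (b i)))) →
        ∀ N, PowerSeries.coeff N (P A m) =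
          PowerSeries.coeff N (∏ i ∈ Finset.Icc 1 N, expandPS i (l (m * b i)))) ∧
      (∀ A, PowerSeries.coeff 0 A = 1 → ∀ m n : R, P A (m + n) = P A m * P A n) ∧
      (∀ A, PowerSeries.coeff 0 A = 1 → P A 0 = 1 ∧ P A 1 = A) := by
  simp_rw [← eq_lambdaSeries_iff]
  refine ⟨fun A hA => existsUnique_eq_lambdaSeries hconst hlin hA,
    fun A m => lambdaSeries l fun i => m * lambdaExponents l A i, ?_, ?_, ?_⟩
  · rintro A m b hb rfl
    dsimp only
    rw [lambdaExponents_lambdaSeries hconst hlin hb]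
  · intro A _ m n
    simp_rw [add_mul]
    exact lambdaSeries_add hconst hadd _ _
  · intro A hA
    simp only [zero_mul, one_mul]
    exact ⟨lambdaSeries_zero hconst hadd, lambdaSeries_lambdaExponents hconst hlin hA⟩
end
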